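/- arXiv:0809.4609 — 5 statements merged into one kernel-verified Lean document; each statement's English description precedes it below -/
import Mathlib

section
/- Fix n ≥ 1 and index ranges α,β,γ,δ ∈ {1,…,n} with repeated indices summed. Let E be the real vector space with basis {Y_0, Y_α, U_α} (dimension 2n+1) and dual basis {Y⁰, Yᵅ, Uᵅ}. Given real numbers t_{αβ} with t_{αβ} = −t_{βα}, g_α, and hᵅ, define the alternating bilinear form Ω = Yᵅ∧Uᵅ + ½ t_{αβ} Yᵅ∧Yᵝ + g_α Yᵅ∧Y⁰ + hᵅ Uᵅ∧Y⁰ and the linear form η = Y⁰. Then ker Ω ∩ ker η = {0}, and the unique R ∈ E with Ω(R,·) = 0 and η(R) = 1 is R = Y_0 + hᵅ Y_α + r_α U_α with r_α = −g_α + t_{βα} hᵝ. (With t_{αβ} = C^γ_{αβ} y_γ, g_α = ρ^i_α ∂H/∂x^i − C^γ_{0α} y_γ and hᵅ = ∂H/∂y_α, this is the pointwise statement that the pair (Ω_h, η) associated with a Hamiltonian section h on a Lie affgebroid is cosymplectic and that the components of its Reeb section give the Hamilton equations dx^i/dt = ρ^i_0 + ρ^i_α ∂H/∂y_α, dy_α/dt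 = −ρ^i_α ∂H/∂x^i + y_γ(C^γ_{0α} + C^γ_{βα} ∂H/∂y_β).) -/
/-!
Write `u = u⁰ Y₀ + u_Y^α Y_α + u_U^α U_α`. Contracting `Ω` with `u` gives the covector whose
`U^γ`-, `Y^γ`- and `Y⁰`-components are `u_Y^γ - hᵞ u⁰`, `t_{αγ} u_Y^α - u_U^γ - g_γ u⁰` and
`g_α u_Y^α + hᵅ u_U^α`. The first two vanish exactly when `u = u⁰ R`, and then the third vanishes
as well, because `t` is antisymmetric. So `ker Ω` is the line spanned by `R`, which meets `ker η`
only in `0` since `η(R) = 1`.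
-/

open scoped Matrix

namespace HamiltonianCosymplectic

variable {ι K : Type*} [Fintype ι] [Field K]

/-- Coordinates are taken with respect to the basis `{Y₀, Y_α, U_α}`. -/
def twoForm (t : ι → ι → K) (g h : ι → K) (u v : K × (ι → K) × (ι → K)) : K :=
  (∑ α, (u.2.1 α * v.2.2 α - v.2.1 α * u.2.2 α))
    + (1 / 2) * (∑ α, ∑ β, t α β * (u.2.1 α * v.2.1 β - v.2.1 α * u.2.1 β))
    + (∑ α, g α * (u.2.1 α * v.1 - v.2.1 α * u.1))
    + (∑ α, h α * (u.2.2 α * v.1 - v.2.2 α * u.1))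

def reebCoeff (t : ι → ι → K) (g h : ι → K) : ι → K :=
  fun α => -g α + ∑ β, t β α * h β

def reebVector (t : ι → ι → K) (g h : ι → K) : K × (ι → K) × (ι → K) :=
  (1, h, reebCoeff t g h)

variable {t : ι → ι → K}

theorem sum_sum_antisymm_swap (ht : ∀ α β, t α β = -t β α) (a b : ι → K) :
    ∑ α, ∑ β, t α β * (b α * a β) = -∑ α, ∑ β, t α β * (a α * b β) := by
  rw [Finset.sum_comm, ← Finset.sum_neg_distrib]
  refine Finset.sum_congr rfl fun α _ => ?_
  rw [← Finset.sum_neg_distrib]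
  refine Finset.sum_congr rfl fun β _ => ?_
  rw [ht β α]
  ring

theorem sum_sum_antisymm_mul_self [NeZero (2 : K)] (ht : ∀ α β, t α β = -t β α) (a : ι → K) :
    ∑ α, ∑ β, t α β * (a α * a β) = 0 := by
  have hswap := sum_sum_antisymm_swap ht a a
  have h2 : (2 : K) * ∑ α, ∑ β, t α β * (a α * a β) = 0 := by linear_combination hswap
  simpa [NeZero.ne (2 : K)] using h2

theorem twoForm_eq_contraction [NeZero (2 : K)] (ht : ∀ α β, t α β = -t β α) (g h : ι → K)
    (u v : K × (ι → K) × (ι → K)) :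
    twoForm t g h u v =
      v.1 * (g ⬝ᵥ u.2.1 + h ⬝ᵥ u.2.2)
        + v.2.1 ⬝ᵥ (fun γ => ∑ α, t α γ * u.2.1 α - u.2.2 γ - g γ * u.1)
        + v.2.2 ⬝ᵥ (u.2.1 - u.1 • h) := by
  have hquad : ∑ α, ∑ β, t α β * (u.2.1 α * v.2.1 β - v.2.1 α * u.2.1 β)
      = 2 * ∑ γ, v.2.1 γ * ∑ α, t α γ * u.2.1 α := by
    simp only [mul_sub, Finset.sum_sub_distrib]
    rw [sum_sum_antisymm_swap ht u.2.1 v.2.1, sub_neg_eq_add, ← two_mul, Finset.sum_comm]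
    simp only [Finset.mul_sum]
    exact Finset.sum_congr rfl fun _ _ => Finset.sum_congr rfl fun _ _ => by ring
  have hhalf : (1 / 2 : K) * 2 = 1 := by field_simp [NeZero.ne (2 : K)]
  rw [twoForm, hquad, ← mul_assoc, hhalf, one_mul]
  simp only [dotProduct, mul_add, Finset.mul_sum _ _ v.1, ← Finset.sum_add_distrib]
  refine Finset.sum_congr rfl fun _ _ => ?_
  simp only [Pi.sub_apply, Pi.smul_apply, smul_eq_mul]
  ring

theorem forall_contraction_eq_zero_iff (a : K) (b c : ι → K) :
    (∀ v : K × (ι → K) × (ι → K), v.1 * a + v.2.1 ⬝ᵥ b + v.2.2 ⬝ᵥ c = 0) ↔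
      a = 0 ∧ b = 0 ∧ c = 0 := by
  classical
  refine ⟨fun hv => ⟨?_, funext fun γ => ?_, funext fun γ => ?_⟩, ?_⟩
  · simpa using hv (1, 0, 0)
  · simpa using hv (0, Pi.single γ 1, 0)
  · simpa using hv (0, 0, Pi.single γ 1)
  · rintro ⟨rfl, rfl, rfl⟩ v
    simp

theorem dotProduct_reebCoeff [NeZero (2 : K)] (ht : ∀ α β, t α β = -t β α) (g h : ι → K) :
    h ⬝ᵥ reebCoeff t g h = -(g ⬝ᵥ h) := by
  have hquad := sum_sum_antisymm_mul_self ht h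
  rw [Finset.sum_comm] at hquad
  simp only [reebCoeff, dotProduct, mul_add, Finset.sum_add_distrib, Finset.mul_sum]
  rw [← Finset.sum_neg_distrib, ← add_zero (∑ i, -(g i * h i)), ← hquad]
  congr 1
  · exact Finset.sum_congr rfl fun _ _ => by ring
  · exact Finset.sum_congr rfl fun _ _ => Finset.sum_congr rfl fun _ _ => by ring

theorem twoForm_left_eq_zero_iff [NeZero (2 : K)] (ht : ∀ α β, t α β = -t β α) (g h : ι → K)
    (u : K × (ι → K) × (ι → K)) :
    (∀ v, twoForm t g h u v = 0) ↔ u = u.1 • reebVector t g h := by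
  simp only [twoForm_eq_contraction ht, forall_contraction_eq_zero_iff]
  obtain ⟨s, y, z⟩ := u
  simp only [reebVector, Prod.smul_mk, Prod.mk.injEq, smul_eq_mul, mul_one, true_and]
  have hsum : ∀ γ, ∑ α, t α γ * (s * h α) = s * ∑ β, t β γ * h β := fun γ => by
    simp only [Finset.mul_sum]
    exact Finset.sum_congr rfl fun _ _ => by ring
  constructor
  · rintro ⟨-, hz, hy⟩
    obtain rfl : y = s • h := sub_eq_zero.mp hy
    refine ⟨rfl, funext fun γ => ?_⟩
    have hzγ := congrFun hz γ
    simp only [reebCoeff, Pi.smul_apply, smul_eq_mul, hsum, Pi.zero_apply] at hzγ ⊢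
    linear_combination -hzγ
  · rintro ⟨rfl, rfl⟩
    refine ⟨?_, funext fun γ => ?_, sub_self _⟩
    · rw [dotProduct_smul, dotProduct_smul, dotProduct_reebCoeff ht, smul_eq_mul, smul_eq_mul,
        ← mul_add, add_neg_cancel, mul_zero]
    · simp only [reebCoeff, Pi.smul_apply, smul_eq_mul, hsum, Pi.zero_apply]
      ring

end HamiltonianCosymplectic

open HamiltonianCosymplectic in
theorem stmt_5_general (n : ℕ)
    (t : Fin n → Fin n → ℝ) (ht : ∀ α β, t α β = - t β α)
    (g h : Fin n → ℝ)
    (Ω : (ℝ × (Fin n → ℝ) × (Fin n → ℝ)) → (ℝ × (Fin n → ℝ) × (Fin n → ℝ)) → ℝ)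
    (hΩ : ∀ u v, Ω u v =
      (∑ α, (u.2.1 α * v.2.2 α - v.2.1 α * u.2.2 α))
      + (1 / 2) * (∑ α, ∑ β, t α β * (u.2.1 α * v.2.1 β - v.2.1 α * u.2.1 β))
      + (∑ α, g α * (u.2.1 α * v.1 - v.2.1 α * u.1))
      + (∑ α, h α * (u.2.2 α * v.1 - v.2.2 α * u.1)))
    (η : (ℝ × (Fin n → ℝ) × (Fin n → ℝ)) → ℝ) (hη : ∀ u, η u = u.1) :
    (∀ u, (∀ v, Ω u v = 0) → η u = 0 → u = 0) ∧
    (∀ u, ((∀ v, Ω u v = 0) ∧ η u = 1) ↔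
      u = ((1 : ℝ), h, fun α => - g α + ∑ β, t β α * h β)) := by
  obtain rfl : Ω = twoForm t g h := funext₂ hΩ
  obtain rfl : η = Prod.fst := funext hη
  change _ ∧ ∀ u, _ ↔ u = reebVector t g h
  simp only [twoForm_left_eq_zero_iff ht]
  refine ⟨fun u hu hu₁ => by rw [hu, hu₁, zero_smul], fun u => ⟨?_, ?_⟩⟩
  · rintro ⟨hu, hu₁⟩
    rw [hu, hu₁, one_smul]
  · rintro rfl
    exact ⟨(one_smul ℝ _).symm, rfl⟩

/-- On the `(2n+1)`-dimensional space `E` with basis `{Y₀, Y_α, U_α}`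
(modeled here as `ℝ × (Fin n → ℝ) × (Fin n → ℝ)`, the three components being the
coordinates w.r.t. `Y₀`, the `Y_α` and the `U_α`), given `t_{αβ} = -t_{βα}`, `g_α`, `hᵅ`,
the pair `(Ω, η)` with
`Ω = Yᵅ∧Uᵅ + ½ t_{αβ} Yᵅ∧Yᵝ + g_α Yᵅ∧Y⁰ + hᵅ Uᵅ∧Y⁰` and `η = Y⁰`
satisfies `ker Ω ∩ ker η = {0}`, and the unique `R` with `Ω(R,·) = 0`, `η(R) = 1` is
`R = Y₀ + hᵅ Y_α + r_α U_α` with `r_α = -g_α + t_{βα} hᵝ`. -/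
theorem stmt_5 (n : ℕ) (hn : 1 ≤ n)
    (t : Fin n → Fin n → ℝ) (ht : ∀ α β, t α β = - t β α)
    (g h : Fin n → ℝ)
    (Ω : (ℝ × (Fin n → ℝ) × (Fin n → ℝ)) → (ℝ × (Fin n → ℝ) × (Fin n → ℝ)) → ℝ)
    (hΩ : ∀ u v, Ω u v =
      (∑ α, (u.2.1 α * v.2.2 α - v.2.1 α * u.2.2 α))
      + (1 / 2) * (∑ α, ∑ β, t α β * (u.2.1 α * v.2.1 β - v.2.1 α * u.2.1 β))
      + (∑ α, g α * (u.2.1 α * v.1 - v.2.1 α * u.1))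
      + (∑ α, h α * (u.2.2 α * v.1 - v.2.2 α * u.1)))
    (η : (ℝ × (Fin n → ℝ) × (Fin n → ℝ)) → ℝ) (hη : ∀ u, η u = u.1) :
    (∀ u, (∀ v, Ω u v = 0) → η u = 0 → u = 0) ∧
    (∀ u, ((∀ v, Ω u v = 0) ∧ η u = 1) ↔
      u = ((1 : ℝ), h, fun α => - g α + ∑ β, t β α * h β)) :=
  stmt_5_general n t ht g h Ω hΩ η hη
end

section
/- With the notation of the context, there exists a vector Z ∈ E with Ω(Z,·) = 0 and η(Z) = 1 if and only if φ_a = 0 for all a ∈ {m̄+1,…,n}. -/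
/-!
Write `θ = Γ_α Yᵅ + βᵅ P_α + φ_a Vᵃ`; then `Ω = Yᵅ∧P_α + θ∧Y⁰ + ½ s_{αβ} Yᵅ∧Yᵝ`. Contracting with
`V_a` gives `Ω(Z, V_a) = -φ_a η(Z)`, so `φ = 0` is necessary. Conversely, if `φ = 0` then
`Z = Y₀ + βᵅ Y_α + (βᵝ s_{βα} - Γ_α) Pᵅ` works: `θ(Z) = βᵅ s_{αβ} βᵝ` vanishes by antisymmetry of
`s`, and the choice of the `Pᵅ`-components cancels the `Yᵅ`-components of `Ω(Z, ·)`.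
-/

/-- A vector of the space `E` with basis `{Y₀, Y_α, P⁰, Pᵅ, V_a}`, where the index `α`
runs over `{1,…,n} = {1,…,m̄} ⊔ {m̄+1,…,n}` (modeled as `Fin mb ⊕ Fin k`) and the index
`a` runs over `{m̄+1,…,n}` (modeled as `Fin k`).  The fields are the coordinates with
respect to `Y₀`, the `Y_α`, `P⁰`, the `Pᵅ` and the `V_a` respectively. -/
structure EVec (mb k : ℕ) where
  y0 : ℝ
  y : Fin mb ⊕ Fin k → ℝ
  p0 : ℝ
  p : Fin mb ⊕ Fin k → ℝ
  v : Fin k → ℝ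

open Matrix

section DotProduct

variable {ι R : Type*} [Fintype ι] [CommRing R]

theorem sum_sum_mul_wedge (s : Matrix ι ι R) (u v : ι → R) :
    ∑ i, ∑ j, s i j * (u i * v j - v i * u j) = u ⬝ᵥ s *ᵥ v - v ⬝ᵥ s *ᵥ u := by
  simp only [dotProduct, mulVec, Finset.mul_sum, ← Finset.sum_sub_distrib]
  refine Fintype.sum_congr _ _ fun i => Fintype.sum_congr _ _ fun j => ?_
  ring

theorem sum_mul_sub_mul (c x x' : ι → R) (t t' : R) :
    ∑ i, c i * (x i * t - x' i * t') = c ⬝ᵥ x * t - c ⬝ᵥ x' * t' := by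
  simp only [dotProduct, Finset.sum_mul, ← Finset.sum_sub_distrib, mul_sub, mul_assoc]

variable {s : Matrix ι ι R}

theorem dotProduct_mulVec_comm_of_antisymm (hs : ∀ i j, s i j = -s j i) (u v : ι → R) :
    v ⬝ᵥ s *ᵥ u = -(u ⬝ᵥ s *ᵥ v) := by
  have hsT : sᵀ = -s := Matrix.ext fun i j => hs j i
  rw [dotProduct_mulVec, dotProduct_comm, ← mulVec_transpose, hsT, neg_mulVec, dotProduct_neg]

theorem dotProduct_mulVec_self_of_antisymm [IsAddTorsionFree R] (hs : ∀ i j, s i j = -s j i)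
    (u : ι → R) : u ⬝ᵥ s *ᵥ u = 0 :=
  self_eq_neg.mp (dotProduct_mulVec_comm_of_antisymm hs u u)

end DotProduct

namespace EVec

variable {mb k : ℕ} {Γ bb : Fin mb ⊕ Fin k → ℝ} {s : Matrix (Fin mb ⊕ Fin k) (Fin mb ⊕ Fin k) ℝ}

noncomputable def omega (Γ : Fin mb ⊕ Fin k → ℝ) (s : Matrix (Fin mb ⊕ Fin k) (Fin mb ⊕ Fin k) ℝ)
    (bb : Fin mb ⊕ Fin k → ℝ) (φ : Fin k → ℝ) (u v : EVec mb k) : ℝ :=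
  (∑ α, (u.y α * v.p α - v.y α * u.p α))
    + (∑ α, Γ α * (u.y α * v.y0 - v.y α * u.y0))
    + (∑ A, bb (Sum.inl A) * (u.p (Sum.inl A) * v.y0 - v.p (Sum.inl A) * u.y0))
    + (∑ a, bb (Sum.inr a) * (u.p (Sum.inr a) * v.y0 - v.p (Sum.inr a) * u.y0))
    + (1 / 2) * (∑ α, ∑ β, s α β * (u.y α * v.y β - v.y α * u.y β))
    + (∑ a, φ a * (u.v a * v.y0 - v.v a * u.y0))

def theta (Γ bb : Fin mb ⊕ Fin k → ℝ) (φ : Fin k → ℝ) (u : EVec mb k) : ℝ :=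
  Γ ⬝ᵥ u.y + bb ⬝ᵥ u.p + φ ⬝ᵥ u.v

theorem omega_eq (hs : ∀ α β, s α β = -s β α) (φ : Fin k → ℝ) (u v : EVec mb k) :
    omega Γ s bb φ u v = u.y ⬝ᵥ v.p - v.y ⬝ᵥ u.p + theta Γ bb φ u * v.y0
      - theta Γ bb φ v * u.y0 + u.y ⬝ᵥ s *ᵥ v.y := by
  have hbb : ∀ w : EVec mb k, bb ⬝ᵥ w.p =
      (fun A => bb (Sum.inl A)) ⬝ᵥ (fun A => w.p (Sum.inl A))
        + (fun a => bb (Sum.inr a)) ⬝ᵥ (fun a => w.p (Sum.inr a)) :=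
    fun w => Fintype.sum_sum_type _
  unfold omega
  rw [Finset.sum_sub_distrib, sum_mul_sub_mul, sum_mul_sub_mul, sum_mul_sub_mul, sum_mul_sub_mul,
    sum_sum_mul_wedge, dotProduct_mulVec_comm_of_antisymm hs, theta, theta, hbb, hbb]
  unfold dotProduct
  ring

def vBasis (a : Fin k) : EVec mb k := ⟨0, 0, 0, 0, Pi.single a 1⟩

theorem theta_vBasis (φ : Fin k → ℝ) (a : Fin k) : theta Γ bb φ (vBasis a) = φ a := by
  simp [theta, vBasis]

def reeb (Γ bb : Fin mb ⊕ Fin k → ℝ) (s : Matrix (Fin mb ⊕ Fin k) (Fin mb ⊕ Fin k) ℝ) :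
    EVec mb k :=
  ⟨1, bb, 0, bb ᵥ* s - Γ, 0⟩

theorem theta_reeb (hs : ∀ α β, s α β = -s β α) (φ : Fin k → ℝ) :
    theta Γ bb φ (reeb Γ bb s) = 0 := by
  have hquad : bb ⬝ᵥ bb ᵥ* s = 0 := by
    rw [dotProduct_comm, ← dotProduct_mulVec, dotProduct_mulVec_self_of_antisymm hs]
  simp only [theta, reeb, dotProduct_sub, hquad, dotProduct_comm Γ bb, dotProduct_zero]
  ring

theorem omega_vBasis (hs : ∀ α β, s α β = -s β α) (φ : Fin k → ℝ) (u : EVec mb k) (a : Fin k) :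
    omega Γ s bb φ u (vBasis a) = -(φ a * u.y0) := by
  rw [omega_eq hs, theta_vBasis]
  simp [vBasis]

theorem omega_reeb (hs : ∀ α β, s α β = -s β α) (w : EVec mb k) :
    omega Γ s bb 0 (reeb Γ bb s) w = 0 := by
  rw [omega_eq hs, theta_reeb hs, dotProduct_mulVec]
  simp only [theta, reeb, dotProduct_sub, zero_dotProduct]
  rw [dotProduct_comm w.y, dotProduct_comm w.y]
  ring

end EVec

theorem stmt_7_general (mb k : ℕ)
    (Γ : Fin mb ⊕ Fin k → ℝ)
    (s : (Fin mb ⊕ Fin k) → (Fin mb ⊕ Fin k) → ℝ)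
    (hs : ∀ α β, s α β = - s β α)
    (bb : Fin mb ⊕ Fin k → ℝ) (φ : Fin k → ℝ)
    (Ω : EVec mb k → EVec mb k → ℝ)
    (hΩ : ∀ u v, Ω u v =
      (∑ α, (u.y α * v.p α - v.y α * u.p α))
      + (∑ α, Γ α * (u.y α * v.y0 - v.y α * u.y0))
      + (∑ A, bb (Sum.inl A) * (u.p (Sum.inl A) * v.y0 - v.p (Sum.inl A) * u.y0))
      + (∑ a, bb (Sum.inr a) * (u.p (Sum.inr a) * v.y0 - v.p (Sum.inr a) * u.y0))
      + (1 / 2) * (∑ α, ∑ β, s α β * (u.y α * v.y β - v.y α * u.y β))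
      + (∑ a, φ a * (u.v a * v.y0 - v.v a * u.y0)))
    (η : EVec mb k → ℝ) (hη : ∀ u, η u = u.y0) :
    (∃ Z : EVec mb k, (∀ w, Ω Z w = 0) ∧ η Z = 1) ↔ (∀ a, φ a = 0) := by
  obtain rfl : Ω = EVec.omega Γ s bb φ := funext₂ hΩ
  constructor
  · rintro ⟨Z, hZ, hZη⟩ a
    have hZa := hZ (EVec.vBasis a)
    rwa [EVec.omega_vBasis hs, ← hη, hZη, mul_one, neg_eq_zero] at hZa
  · intro hφ
    obtain rfl : φ = 0 := funext hφ
    exact ⟨EVec.reeb Γ bb s, EVec.omega_reeb hs, hη _⟩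

/-- With
`Ω = Yᵅ∧P_α + Γ_α Yᵅ∧Y⁰ + βᴬ P_A∧Y⁰ + βᵃ P_a∧Y⁰ + ½ s_{αβ} Yᵅ∧Yᵝ + φ_a Vᵃ∧Y⁰`
and `η = Y⁰`, there exists a vector `Z` with `Ω(Z,·) = 0` and `η(Z) = 1` if and only if
`φ_a = 0` for all `a`. -/
theorem stmt_7 (mb k : ℕ) (hn : 1 ≤ mb + k)
    (Γ : Fin mb ⊕ Fin k → ℝ)
    (s : (Fin mb ⊕ Fin k) → (Fin mb ⊕ Fin k) → ℝ)
    (hs : ∀ α β, s α β = - s β α)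
    (bb : Fin mb ⊕ Fin k → ℝ) (φ : Fin k → ℝ)
    (Ω : EVec mb k → EVec mb k → ℝ)
    (hΩ : ∀ u v, Ω u v =
      (∑ α, (u.y α * v.p α - v.y α * u.p α))
      + (∑ α, Γ α * (u.y α * v.y0 - v.y α * u.y0))
      + (∑ A, bb (Sum.inl A) * (u.p (Sum.inl A) * v.y0 - v.p (Sum.inl A) * u.y0))
      + (∑ a, bb (Sum.inr a) * (u.p (Sum.inr a) * v.y0 - v.p (Sum.inr a) * u.y0))
      + (1 / 2) * (∑ α, ∑ β, s α β * (u.y α * v.y β - v.y α * u.y β))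
      + (∑ a, φ a * (u.v a * v.y0 - v.v a * u.y0)))
    (η : EVec mb k → ℝ) (hη : ∀ u, η u = u.y0) :
    (∃ Z : EVec mb k, (∀ w, Ω Z w = 0) ∧ η Z = 1) ↔ (∀ a, φ a = 0) :=
  stmt_7_general mb k Γ s hs bb φ Ω hΩ η hη
end

section
/- Assume the setting of the context. Let t ↦ (x^i(t), y^α(t), y_α(t)) be a smooth curve in U × ℝⁿ × ℝⁿ satisfying the constraints y^A(t) = Ψ^A(x(t), y^a(t)) and the momentum relations y_a(t) = (∂L̃/∂y^a − y_A ∂Ψ^A/∂y^a)(t) along the curve. Set φ^A = y^A − Ψ^A and λ_A(t) = y_A(t) − ∂L/∂y^A along the curve. Then the curve satisfies the vakonomic equations (V1)–(V3) if and only if it satisfies: ẋ^i = ρ^i_0 + y^α ρ^i_α; d/dt(∂L/∂y^α) − ρ^i_α ∂L/∂x^i = −λ_A [d/dt(∂φ^A/∂y^α) − ρ^i_α ∂φ^A/∂x^i] − λ̇_A ∂φ^A/∂y^α − y_γ(C^γ_{α0} + y^β C^γ_{αβ}) for all α; and φ^A = 0 for all A. -/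
/-- Partial derivative of `f : (ι → ℝ) × (κ → ℝ) → ℝ` in the `i`-th base direction. -/
noncomputable def pd1 {ι κ : Type*} [Fintype ι] [DecidableEq ι] [Fintype κ]
    (f : (ι → ℝ) × (κ → ℝ) → ℝ) (i : ι) (q : (ι → ℝ) × (κ → ℝ)) : ℝ :=
  fderiv ℝ f q (Pi.single i 1, 0)

/-- Partial derivative of `f : (ι → ℝ) × (κ → ℝ) → ℝ` in the `j`-th fibre direction. -/
noncomputable def pd2 {ι κ : Type*} [Fintype ι] [Fintype κ] [DecidableEq κ]
    (f : (ι → ℝ) × (κ → ℝ) → ℝ) (j : κ) (q : (ι → ℝ) × (κ → ℝ)) : ℝ :=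
  fderiv ℝ f q (0, Pi.single j 1)

/-- The momenta `y_a := ∂L̃/∂yᵃ − y_A ∂Ψᴬ/∂yᵃ` determined by the constrained
Lagrangian `L̃`, the constraints `Ψᴬ` and the momenta `y_A = p`. -/
noncomputable def mom {ι : Type*} [Fintype ι] [DecidableEq ι] {mb k : ℕ}
    (Lt : (ι → ℝ) × (Fin k → ℝ) → ℝ)
    (Ψ : Fin mb → (ι → ℝ) × (Fin k → ℝ) → ℝ)
    (p : Fin mb → ℝ) (q : (ι → ℝ) × (Fin k → ℝ)) (a : Fin k) : ℝ :=
  pd2 Lt a q - ∑ A, p A * pd2 (Ψ A) a q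

/-- The vakonomic equations (V1)–(V3) at time `t`, for structure functions
`ρ⁰, ρ, C⁰, C` (with `C^γ_{α0} := −C^γ_{0α}`), constrained Lagrangian `Lt = L̃`,
constraints `Ψᴬ`, base curve `x`, velocity curve `yᵃ = ya` and momenta `y_A = pA`;
the momenta `y_a` are `mom Lt Ψ (pA t) (x t, ya t)`.  Repeated indices are summed. -/
noncomputable def VakEqs {ι : Type*} [Fintype ι] [DecidableEq ι] {mb k : ℕ}
    (ρ0 : ι → (ι → ℝ) → ℝ) (ρ : (Fin mb ⊕ Fin k) → ι → (ι → ℝ) → ℝ)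
    (C0 : (Fin mb ⊕ Fin k) → (Fin mb ⊕ Fin k) → (ι → ℝ) → ℝ)
    (C : (Fin mb ⊕ Fin k) → (Fin mb ⊕ Fin k) → (Fin mb ⊕ Fin k) → (ι → ℝ) → ℝ)
    (Lt : (ι → ℝ) × (Fin k → ℝ) → ℝ)
    (Ψ : Fin mb → (ι → ℝ) × (Fin k → ℝ) → ℝ)
    (x : ℝ → ι → ℝ) (ya : ℝ → Fin k → ℝ) (pA : ℝ → Fin mb → ℝ) (t : ℝ) : Prop :=
  -- (V1)
  (∀ i, deriv (fun s => x s i) t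
      = ρ0 i (x t) + (∑ A, Ψ A (x t, ya t) * ρ (Sum.inl A) i (x t))
        + ∑ a, ya t a * ρ (Sum.inr a) i (x t)) ∧
  -- (V2)
  (∀ A, deriv (fun s => pA s A) t
      = (∑ i, (pd1 Lt i (x t, ya t) - ∑ B, pA t B * pd1 (Ψ B) i (x t, ya t))
            * ρ (Sum.inl A) i (x t))
        - ∑ γ, Sum.elim (pA t) (mom Lt Ψ (pA t) (x t, ya t)) γ
            * (-(C0 γ (Sum.inl A) (x t))
               + (∑ B, Ψ B (x t, ya t) * C γ (Sum.inl A) (Sum.inl B) (x t))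
               + ∑ a, ya t a * C γ (Sum.inl A) (Sum.inr a) (x t))) ∧
  -- (V3)
  (∀ a, deriv (fun s => mom Lt Ψ (pA s) (x s, ya s) a) t
      = (∑ i, (pd1 Lt i (x t, ya t) - ∑ A, pA t A * pd1 (Ψ A) i (x t, ya t))
            * ρ (Sum.inr a) i (x t))
        - ∑ γ, Sum.elim (pA t) (mom Lt Ψ (pA t) (x t, ya t)) γ
            * (-(C0 γ (Sum.inr a) (x t))
               + (∑ B, Ψ B (x t, ya t) * C γ (Sum.inr a) (Sum.inl B) (x t))
               + ∑ b, ya t b * C γ (Sum.inr a) (Sum.inr b) (x t)))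

/-- The constrained Lagrangian `L̃(xⁱ, yᵃ) = L(xⁱ, Ψᴬ(xⁱ,yᵇ), yᵃ)` obtained from a
Lagrangian `L` defined for all velocities `y^α`, `α ∈ {1,…,m̄} ⊔ {m̄+1,…,n}`. -/
noncomputable def Ltil {ι : Type*} {mb k : ℕ}
    (L : (ι → ℝ) × ((Fin mb ⊕ Fin k) → ℝ) → ℝ)
    (Ψ : Fin mb → (ι → ℝ) × (Fin k → ℝ) → ℝ) :
    (ι → ℝ) × (Fin k → ℝ) → ℝ :=
  fun q => L (q.1, Sum.elim (fun A => Ψ A q) q.2)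

/-- The constraint functions `φᴬ = yᴬ − Ψᴬ`, as functions of `(xⁱ, y^α)`. -/
noncomputable def phiA {ι : Type*} {mb k : ℕ}
    (Ψ : Fin mb → (ι → ℝ) × (Fin k → ℝ) → ℝ) (A : Fin mb) :
    (ι → ℝ) × ((Fin mb ⊕ Fin k) → ℝ) → ℝ :=
  fun q => q.2 (Sum.inl A) - Ψ A (q.1, fun a => q.2 (Sum.inr a))

namespace S11

variable {m mb k : ℕ}

noncomputable def Pclm (m mb k : ℕ) :
    ((Fin m → ℝ) × ((Fin mb ⊕ Fin k) → ℝ)) →L[ℝ] ((Fin m → ℝ) × (Fin k → ℝ)) :=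
  (ContinuousLinearMap.fst ℝ _ _).prod
    ((ContinuousLinearMap.pi (fun a => ContinuousLinearMap.proj (Sum.inr a))).comp
      (ContinuousLinearMap.snd ℝ _ _))

@[simp] lemma Pclm_apply (q : (Fin m → ℝ) × ((Fin mb ⊕ Fin k) → ℝ)) :
    Pclm m mb k q = (q.1, fun a => q.2 (Sum.inr a)) := rfl

noncomputable def Gmap (Ψ : Fin mb → (Fin m → ℝ) × (Fin k → ℝ) → ℝ)
    (q : (Fin m → ℝ) × (Fin k → ℝ)) : (Fin m → ℝ) × ((Fin mb ⊕ Fin k) → ℝ) :=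
  (q.1, Sum.elim (fun A => Ψ A q) q.2)

noncomputable def DG (Ψ : Fin mb → (Fin m → ℝ) × (Fin k → ℝ) → ℝ)
    (q : (Fin m → ℝ) × (Fin k → ℝ)) :
    ((Fin m → ℝ) × (Fin k → ℝ)) →L[ℝ] ((Fin m → ℝ) × ((Fin mb ⊕ Fin k) → ℝ)) :=
  (ContinuousLinearMap.fst ℝ _ _).prod
    (ContinuousLinearMap.pi (Sum.elim (fun A => fderiv ℝ (Ψ A) q)
      (fun a => (ContinuousLinearMap.proj a).comp (ContinuousLinearMap.snd ℝ _ _))))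

lemma hasFDerivAt_Gmap (Ψ : Fin mb → (Fin m → ℝ) × (Fin k → ℝ) → ℝ)
    (q : (Fin m → ℝ) × (Fin k → ℝ))
    (h : ∀ A, DifferentiableAt ℝ (Ψ A) q) :
    HasFDerivAt (Gmap Ψ) (DG Ψ q) q := by
  refine HasFDerivAt.prodMk hasFDerivAt_fst ?_
  rw [hasFDerivAt_pi']
  intro γ
  rw [ContinuousLinearMap.proj_pi]
  cases γ with
  | inl A => exact (h A).hasFDerivAt
  | inr a => exact (((ContinuousLinearMap.proj a).comp
      (ContinuousLinearMap.snd ℝ (Fin m → ℝ) (Fin k → ℝ))).hasFDerivAt)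

lemma elim_decomp (u0 : Fin m → ℝ) (w : Fin mb → ℝ) (u : Fin k → ℝ) :
    ((u0, Sum.elim w u) : (Fin m → ℝ) × ((Fin mb ⊕ Fin k) → ℝ))
      = ((u0, Sum.elim (0 : Fin mb → ℝ) u) : (Fin m → ℝ) × ((Fin mb ⊕ Fin k) → ℝ))
        + ∑ A, w A • (((0 : Fin m → ℝ), Pi.single (Sum.inl A) (1:ℝ)) :
            (Fin m → ℝ) × ((Fin mb ⊕ Fin k) → ℝ)) := by
  refine Prod.ext ?_ ?_
  · simp [Prod.fst_sum]
  · funext γ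
    cases γ with
    | inl A =>
        simp [Prod.snd_sum, Finset.sum_apply, Pi.single_apply]
    | inr a =>
        simp [Prod.snd_sum, Finset.sum_apply, Pi.single_apply]

lemma elim_single (a : Fin k) :
    (Sum.elim (0 : Fin mb → ℝ) (Pi.single a 1) : (Fin mb ⊕ Fin k) → ℝ)
      = Pi.single (Sum.inr a) 1 := by
  funext γ
  cases γ with
  | inl A => simp [Pi.single_apply]
  | inr b => simp [Pi.single_apply, Sum.inr.injEq]

lemma hasFDerivAt_Ltil (L : (Fin m → ℝ) × ((Fin mb ⊕ Fin k) → ℝ) → ℝ)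
    (Ψ : Fin mb → (Fin m → ℝ) × (Fin k → ℝ) → ℝ)
    (q : (Fin m → ℝ) × (Fin k → ℝ))
    (hL : DifferentiableAt ℝ L (Gmap Ψ q))
    (hΨ : ∀ A, DifferentiableAt ℝ (Ψ A) q) :
    HasFDerivAt (Ltil L Ψ) ((fderiv ℝ L (Gmap Ψ q)).comp (DG Ψ q)) q :=
  (hL.hasFDerivAt).comp q (hasFDerivAt_Gmap Ψ q hΨ)

lemma pd1_Ltil (L : (Fin m → ℝ) × ((Fin mb ⊕ Fin k) → ℝ) → ℝ)
    (Ψ : Fin mb → (Fin m → ℝ) × (Fin k → ℝ) → ℝ)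
    (q : (Fin m → ℝ) × (Fin k → ℝ))
    (hL : DifferentiableAt ℝ L (Gmap Ψ q))
    (hΨ : ∀ A, DifferentiableAt ℝ (Ψ A) q) (i : Fin m) :
    pd1 (Ltil L Ψ) i q
      = pd1 L i (Gmap Ψ q) + ∑ A, pd2 L (Sum.inl A) (Gmap Ψ q) * pd1 (Ψ A) i q := by
  have h := (hasFDerivAt_Ltil L Ψ q hL hΨ).fderiv
  unfold pd1 pd2
  rw [h]
  have hDG : DG Ψ q (Pi.single i 1, 0)
      = ((Pi.single i 1 : Fin m → ℝ), Sum.elim (fun A => fderiv ℝ (Ψ A) q (Pi.single i 1, 0)) 0) := by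
    refine Prod.ext rfl ?_
    funext γ
    cases γ with
    | inl A => rfl
    | inr a => rfl
  rw [ContinuousLinearMap.comp_apply, hDG, elim_decomp]
  have h0 : ((Pi.single i 1 : Fin m → ℝ), (Sum.elim 0 (0 : Fin k → ℝ) : (Fin mb ⊕ Fin k) → ℝ))
      = ((Pi.single i 1 : Fin m → ℝ), (0 : (Fin mb ⊕ Fin k) → ℝ)) := by
    refine Prod.ext rfl ?_
    funext γ; cases γ <;> rfl
  rw [h0, map_add, map_sum]
  have hsm : ∀ (c : ℝ) (v : (Fin mb ⊕ Fin k) → ℝ),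
      fderiv ℝ L (Gmap Ψ q) ((0 : Fin m → ℝ), c • v)
        = c * fderiv ℝ L (Gmap Ψ q) ((0 : Fin m → ℝ), v) := by
    intro c v
    rw [show (((0 : Fin m → ℝ), c • v) : (Fin m → ℝ) × ((Fin mb ⊕ Fin k) → ℝ))
        = c • (((0 : Fin m → ℝ), v)) by simp [Prod.smul_mk], map_smul]
    rfl
  simp [hsm, mul_comm]

lemma pd2_Ltil (L : (Fin m → ℝ) × ((Fin mb ⊕ Fin k) → ℝ) → ℝ)
    (Ψ : Fin mb → (Fin m → ℝ) × (Fin k → ℝ) → ℝ)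
    (q : (Fin m → ℝ) × (Fin k → ℝ))
    (hL : DifferentiableAt ℝ L (Gmap Ψ q))
    (hΨ : ∀ A, DifferentiableAt ℝ (Ψ A) q) (a : Fin k) :
    pd2 (Ltil L Ψ) a q
      = pd2 L (Sum.inr a) (Gmap Ψ q) + ∑ A, pd2 L (Sum.inl A) (Gmap Ψ q) * pd2 (Ψ A) a q := by
  have h := (hasFDerivAt_Ltil L Ψ q hL hΨ).fderiv
  unfold pd2
  rw [h]
  have hDG : DG Ψ q (0, Pi.single a 1)
      = ((0 : Fin m → ℝ), Sum.elim (fun A => fderiv ℝ (Ψ A) q (0, Pi.single a 1)) (Pi.single a 1)) := by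
    refine Prod.ext rfl ?_
    funext γ
    cases γ with
    | inl A => rfl
    | inr b => rfl
  rw [ContinuousLinearMap.comp_apply, hDG, elim_decomp, elim_single, map_add, map_sum]
  have hsm : ∀ (c : ℝ) (v : (Fin mb ⊕ Fin k) → ℝ),
      fderiv ℝ L (Gmap Ψ q) ((0 : Fin m → ℝ), c • v)
        = c * fderiv ℝ L (Gmap Ψ q) ((0 : Fin m → ℝ), v) := by
    intro c v
    rw [show (((0 : Fin m → ℝ), c • v) : (Fin m → ℝ) × ((Fin mb ⊕ Fin k) → ℝ))
        = c • (((0 : Fin m → ℝ), v)) by simp [Prod.smul_mk], map_smul]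
    rfl
  simp [hsm, mul_comm]

lemma hasFDerivAt_phiA (Ψ : Fin mb → (Fin m → ℝ) × (Fin k → ℝ) → ℝ) (A : Fin mb)
    (q : (Fin m → ℝ) × ((Fin mb ⊕ Fin k) → ℝ))
    (h : DifferentiableAt ℝ (Ψ A) (Pclm m mb k q)) :
    HasFDerivAt (phiA Ψ A)
      (((ContinuousLinearMap.proj (Sum.inl A)).comp
          (ContinuousLinearMap.snd ℝ (Fin m → ℝ) ((Fin mb ⊕ Fin k) → ℝ)))
        - (fderiv ℝ (Ψ A) (Pclm m mb k q)).comp (Pclm m mb k)) q := by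
  have h1 : HasFDerivAt (fun q' : (Fin m → ℝ) × ((Fin mb ⊕ Fin k) → ℝ) => q'.2 (Sum.inl A))
      ((ContinuousLinearMap.proj (Sum.inl A)).comp
        (ContinuousLinearMap.snd ℝ (Fin m → ℝ) ((Fin mb ⊕ Fin k) → ℝ))) q :=
    (((ContinuousLinearMap.proj (Sum.inl A)).comp
        (ContinuousLinearMap.snd ℝ (Fin m → ℝ) ((Fin mb ⊕ Fin k) → ℝ)))).hasFDerivAt
  have h2 : HasFDerivAt (fun q' => Ψ A (Pclm m mb k q'))
      ((fderiv ℝ (Ψ A) (Pclm m mb k q)).comp (Pclm m mb k)) q :=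
    (h.hasFDerivAt).comp q (Pclm m mb k).hasFDerivAt
  exact h1.sub h2

lemma pd1_phiA (Ψ : Fin mb → (Fin m → ℝ) × (Fin k → ℝ) → ℝ) (A : Fin mb)
    (q : (Fin m → ℝ) × ((Fin mb ⊕ Fin k) → ℝ))
    (h : DifferentiableAt ℝ (Ψ A) (Pclm m mb k q)) (i : Fin m) :
    pd1 (phiA Ψ A) i q = -(pd1 (Ψ A) i (Pclm m mb k q)) := by
  unfold pd1
  rw [(hasFDerivAt_phiA Ψ A q h).fderiv]
  have hv : Pclm m mb k ((Pi.single i 1 : Fin m → ℝ), (0 : (Fin mb ⊕ Fin k) → ℝ))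
      = ((Pi.single i 1 : Fin m → ℝ), (0 : Fin k → ℝ)) := by
    refine Prod.ext rfl ?_
    funext a; rfl
  simp [ContinuousLinearMap.sub_apply, ContinuousLinearMap.comp_apply, hv]

lemma pd2_phiA_inl (Ψ : Fin mb → (Fin m → ℝ) × (Fin k → ℝ) → ℝ) (A B : Fin mb)
    (q : (Fin m → ℝ) × ((Fin mb ⊕ Fin k) → ℝ))
    (h : DifferentiableAt ℝ (Ψ A) (Pclm m mb k q)) :
    pd2 (phiA Ψ A) (Sum.inl B) q = if A = B then 1 else 0 := by
  unfold pd2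
  rw [(hasFDerivAt_phiA Ψ A q h).fderiv]
  have hv : Pclm m mb k ((0 : Fin m → ℝ), (Pi.single (Sum.inl B) 1 : (Fin mb ⊕ Fin k) → ℝ))
      = (0 : (Fin m → ℝ) × (Fin k → ℝ)) := by
    refine Prod.ext rfl ?_
    funext a
    show (Pi.single (Sum.inl B) (1:ℝ) : (Fin mb ⊕ Fin k) → ℝ) (Sum.inr a) = 0
    exact Pi.single_eq_of_ne (by simp) 1
  simp [ContinuousLinearMap.sub_apply, ContinuousLinearMap.comp_apply, hv, Pi.single_apply]

lemma pd2_phiA_inr (Ψ : Fin mb → (Fin m → ℝ) × (Fin k → ℝ) → ℝ) (A : Fin mb) (a : Fin k)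
    (q : (Fin m → ℝ) × ((Fin mb ⊕ Fin k) → ℝ))
    (h : DifferentiableAt ℝ (Ψ A) (Pclm m mb k q)) :
    pd2 (phiA Ψ A) (Sum.inr a) q = -(pd2 (Ψ A) a (Pclm m mb k q)) := by
  unfold pd2
  rw [(hasFDerivAt_phiA Ψ A q h).fderiv]
  have hv : Pclm m mb k ((0 : Fin m → ℝ), (Pi.single (Sum.inr a) 1 : (Fin mb ⊕ Fin k) → ℝ))
      = ((0 : Fin m → ℝ), (Pi.single a 1 : Fin k → ℝ)) := by
    refine Prod.ext rfl ?_
    funext b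
    simp only [Pclm_apply]
    simp [Pi.single_apply, Sum.inr.injEq]
  simp [ContinuousLinearMap.sub_apply, ContinuousLinearMap.comp_apply, hv, Pi.single_apply]

lemma diff_along {F : Type*} [NormedAddCommGroup F] [NormedSpace ℝ F]
    {f : F → ℝ} {S : Set F} (hS : IsOpen S) (hf : ContDiffOn ℝ (⊤ : ℕ∞) f S)
    {c : ℝ → F} (hc : ContDiff ℝ (⊤ : ℕ∞) c) (v : F) (t : ℝ) (ht : c t ∈ S) :
    DifferentiableAt ℝ (fun s => fderiv ℝ f (c s) v) t := by
  have h2 : ContDiffAt ℝ (⊤ : ℕ∞) (fderiv ℝ f) (c t) :=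
    (hf.contDiffAt (hS.mem_nhds ht)).fderiv_right (by simp)
  have h3 : ContDiffAt ℝ (⊤ : ℕ∞) (fun q => fderiv ℝ f q v) (c t) := h2.clm_apply contDiffAt_const
  exact ((h3.comp t hc.contDiffAt)).differentiableAt (by simp)

lemma sum_rearr {n1 n2 : Type*} [Fintype n1] [Fintype n2]
    (dL1 r : n1 → ℝ) (dL2 p : n2 → ℝ) (dΨ : n2 → n1 → ℝ) :
    ∑ i, (dL1 i + ∑ B, dL2 B * dΨ B i - ∑ B, p B * dΨ B i) * r i
      = (∑ i, r i * dL1 i) - ∑ B, (p B - dL2 B) * ∑ i, r i * dΨ B i := by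
  have key : ∀ (c : n2 → ℝ),
      ∑ i, (∑ B, c B * dΨ B i) * r i = ∑ B, c B * ∑ i, r i * dΨ B i := by
    intro c
    simp only [Finset.sum_mul, Finset.mul_sum]
    rw [Finset.sum_comm]
    exact Finset.sum_congr rfl fun B _ => Finset.sum_congr rfl fun i _ => by ring
  have expand : ∑ i, (dL1 i + ∑ B, dL2 B * dΨ B i - ∑ B, p B * dΨ B i) * r i
      = ∑ i, dL1 i * r i + ((∑ i, (∑ B, dL2 B * dΨ B i) * r i)
          - ∑ i, (∑ B, p B * dΨ B i) * r i) := by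
    simp only [show ∀ (a b c r : ℝ), (a + b - c) * r = a * r + (b * r - c * r) from
      fun a b c r => by ring, Finset.sum_add_distrib, Finset.sum_sub_distrib]
  rw [expand, key dL2, key p]
  have hc : ∑ i, dL1 i * r i = ∑ i, r i * dL1 i :=
    Finset.sum_congr rfl fun i _ => mul_comm _ _
  rw [hc]
  simp only [sub_mul, Finset.sum_sub_distrib]
  ring

end S11

/-- A smooth curve `t ↦ (xⁱ(t), y^α(t), y_α(t))` satisfying the
constraints `yᴬ = Ψᴬ(x, yᵃ)` and the momentum relations
`y_a = ∂L̃/∂yᵃ − y_A ∂Ψᴬ/∂yᵃ` satisfies the vakonomic equations (V1)–(V3) iff it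
satisfies the Lagrange-multiplier form of the equations, with `φᴬ = yᴬ − Ψᴬ` and
`λ_A = y_A − ∂L/∂yᴬ`. -/
theorem stmt_11 (m mb k : ℕ) (hm : 0 < m) (hn : 0 < mb + k)
    (U : Set (Fin m → ℝ)) (hU : IsOpen U)
    (ρ0 : Fin m → (Fin m → ℝ) → ℝ)
    (ρ : (Fin mb ⊕ Fin k) → Fin m → (Fin m → ℝ) → ℝ)
    (C0 : (Fin mb ⊕ Fin k) → (Fin mb ⊕ Fin k) → (Fin m → ℝ) → ℝ)
    (C : (Fin mb ⊕ Fin k) → (Fin mb ⊕ Fin k) → (Fin mb ⊕ Fin k) → (Fin m → ℝ) → ℝ)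
    (hρ0 : ∀ i, ContDiffOn ℝ (⊤ : ℕ∞) (ρ0 i) U) (hρ : ∀ α i, ContDiffOn ℝ (⊤ : ℕ∞) (ρ α i) U)
    (hC0 : ∀ γ α, ContDiffOn ℝ (⊤ : ℕ∞) (C0 γ α) U)
    (hC : ∀ γ α β, ContDiffOn ℝ (⊤ : ℕ∞) (C γ α β) U)
    (hskew : ∀ x ∈ U, ∀ γ α β, C γ α β x = - C γ β α x)
    (L : (Fin m → ℝ) × ((Fin mb ⊕ Fin k) → ℝ) → ℝ)
    (hL : ContDiffOn ℝ (⊤ : ℕ∞) L {q | q.1 ∈ U})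
    (Ψ : Fin mb → (Fin m → ℝ) × (Fin k → ℝ) → ℝ)
    (hΨ : ∀ A, ContDiffOn ℝ (⊤ : ℕ∞) (Ψ A) {q | q.1 ∈ U})
    -- the smooth curve `t ↦ (xⁱ(t), y^α(t), y_α(t))`
    (x : ℝ → Fin m → ℝ) (yc : ℝ → (Fin mb ⊕ Fin k) → ℝ)
    (pc : ℝ → (Fin mb ⊕ Fin k) → ℝ)
    (hx : ContDiff ℝ (⊤ : ℕ∞) x) (hyc : ContDiff ℝ (⊤ : ℕ∞) yc) (hpc : ContDiff ℝ (⊤ : ℕ∞) pc)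
    (hmem : ∀ t, x t ∈ U)
    -- the constraints `yᴬ(t) = Ψᴬ(x(t), yᵃ(t))`
    (hcon : ∀ t A, yc t (Sum.inl A) = Ψ A (x t, fun a => yc t (Sum.inr a)))
    -- the momentum relations `y_a = (∂L̃/∂yᵃ − y_A ∂Ψᴬ/∂yᵃ)` along the curve
    (hmom : ∀ t a, pc t (Sum.inr a)
      = mom (Ltil L Ψ) Ψ (fun A => pc t (Sum.inl A)) (x t, fun a' => yc t (Sum.inr a')) a) :
    -- the vakonomic equations (V1)–(V3) ...
    (∀ t, VakEqs ρ0 ρ C0 C (Ltil L Ψ) Ψ x (fun t' a => yc t' (Sum.inr a))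
        (fun t' A => pc t' (Sum.inl A)) t)
    ↔
    -- ... hold iff the Lagrange-multiplier form of the equations holds:
    (∀ t,
      -- `ẋⁱ = ρⁱ₀ + y^α ρⁱ_α`
      (∀ i, deriv (fun s => x s i) t = ρ0 i (x t) + ∑ α, yc t α * ρ α i (x t)) ∧
      -- `d/dt(∂L/∂y^α) − ρⁱ_α ∂L/∂xⁱ`
      --   `= −λ_A [d/dt(∂φᴬ/∂y^α) − ρⁱ_α ∂φᴬ/∂xⁱ] − λ̇_A ∂φᴬ/∂y^α`
      --   ` − y_γ (C^γ_{α0} + y^β C^γ_{αβ})`, for all `α`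
      (∀ α, deriv (fun s => pd2 L α (x s, yc s)) t
          - (∑ i, ρ α i (x t) * pd1 L i (x t, yc t))
        = -(∑ A, (pc t (Sum.inl A) - pd2 L (Sum.inl A) (x t, yc t))
              * (deriv (fun s => pd2 (phiA Ψ A) α (x s, yc s)) t
                 - ∑ i, ρ α i (x t) * pd1 (phiA Ψ A) i (x t, yc t)))
          - (∑ A, deriv (fun s => pc s (Sum.inl A) - pd2 L (Sum.inl A) (x s, yc s)) t
              * pd2 (phiA Ψ A) α (x t, yc t))
          - ∑ γ, pc t γ * (-(C0 γ α (x t)) + ∑ β, yc t β * C γ α β (x t))) ∧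
      -- `φᴬ = 0`
      (∀ A, phiA Ψ A (x t, yc t) = 0)) := by
  classical
  have hSopen : IsOpen {q : (Fin m → ℝ) × ((Fin mb ⊕ Fin k) → ℝ) | q.1 ∈ U} :=
    hU.preimage continuous_fst
  have hSopen' : IsOpen {q : (Fin m → ℝ) × (Fin k → ℝ) | q.1 ∈ U} :=
    hU.preimage continuous_fst
  have hcS : ContDiff ℝ (⊤ : ℕ∞) (fun s => ((x s, yc s) : (Fin m → ℝ) × ((Fin mb ⊕ Fin k) → ℝ))) :=
    ContDiff.prodMk hx hyc
  have hccy : ContDiff ℝ (⊤ : ℕ∞) (fun s => ((x s, fun a => yc s (Sum.inr a)) :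
      (Fin m → ℝ) × (Fin k → ℝ))) :=
    ContDiff.prodMk hx (contDiff_pi.2 fun a => contDiff_pi.1 hyc (Sum.inr a))
  have hGcy : ∀ s, S11.Gmap Ψ (x s, fun a => yc s (Sum.inr a)) = (x s, yc s) := by
    intro s
    refine Prod.ext rfl ?_
    funext γ
    cases γ with
    | inl A => exact (hcon s A).symm
    | inr a => rfl
  have hLd : ∀ s : ℝ, DifferentiableAt ℝ L (x s, yc s) := fun s =>
    (hL.contDiffAt (hSopen.mem_nhds (hmem s))).differentiableAt (by simp)
  have hΨd : ∀ (s : ℝ) A, DifferentiableAt ℝ (Ψ A) (x s, fun a => yc s (Sum.inr a)) :=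
    fun s A => ((hΨ A).contDiffAt (hSopen'.mem_nhds (hmem s))).differentiableAt (by simp)
  -- differentiability in t
  have dL2d : ∀ (γ : Fin mb ⊕ Fin k) (t : ℝ),
      DifferentiableAt ℝ (fun s => pd2 L γ (x s, yc s)) t := by
    intro γ t
    exact S11.diff_along hSopen hL hcS (0, Pi.single γ 1) t (hmem t)
  have dΨ2d : ∀ (A : Fin mb) (a : Fin k) (t : ℝ),
      DifferentiableAt ℝ (fun s => pd2 (Ψ A) a (x s, fun b => yc s (Sum.inr b))) t := by
    intro A a t
    exact S11.diff_along hSopen' (hΨ A) hccy (0, Pi.single a 1) t (hmem t)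
  have dpcd : ∀ (γ : Fin mb ⊕ Fin k) (t : ℝ),
      DifferentiableAt ℝ (fun s => pc s γ) t := fun γ t =>
    differentiableAt_pi.mp ((hpc.differentiable (by simp)) t) γ
  refine forall_congr' fun t => ?_
  -- pointwise facts
  have hV1 : ∀ i, ρ0 i (x t) + (∑ A, Ψ A (x t, fun a => yc t (Sum.inr a)) * ρ (Sum.inl A) i (x t))
        + ∑ a, yc t (Sum.inr a) * ρ (Sum.inr a) i (x t)
      = ρ0 i (x t) + ∑ α, yc t α * ρ α i (x t) := by
    intro i
    rw [Fintype.sum_sum_type]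
    simp only [← hcon t]
    ring
  have hBr : ∀ (α γ : Fin mb ⊕ Fin k),
      (-(C0 γ α (x t)) + (∑ B, Ψ B (x t, fun a => yc t (Sum.inr a)) * C γ α (Sum.inl B) (x t))
        + ∑ b, yc t (Sum.inr b) * C γ α (Sum.inr b) (x t))
      = -(C0 γ α (x t)) + ∑ β, yc t β * C γ α β (x t) := by
    intro α γ
    rw [Fintype.sum_sum_type]
    simp only [← hcon t]
    ring
  have helim : ∀ γ, Sum.elim (fun A => pc t (Sum.inl A))
      (mom (Ltil L Ψ) Ψ (fun A => pc t (Sum.inl A)) (x t, fun a' => yc t (Sum.inr a'))) γ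
      = pc t γ := by
    intro γ
    cases γ with
    | inl A => rfl
    | inr a => exact (hmom t a).symm
  have hF1 : ∀ i, pd1 (Ltil L Ψ) i (x t, fun a => yc t (Sum.inr a))
      = pd1 L i (x t, yc t)
        + ∑ A, pd2 L (Sum.inl A) (x t, yc t) * pd1 (Ψ A) i (x t, fun a => yc t (Sum.inr a)) := by
    intro i
    have h := S11.pd1_Ltil L Ψ (x t, fun a => yc t (Sum.inr a))
      (by rw [hGcy t]; exact hLd t) (fun A => hΨd t A) i
    rw [hGcy t] at h
    exact h
  have hmomfun : ∀ (s : ℝ) (a : Fin k),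
      mom (Ltil L Ψ) Ψ (fun A => pc s (Sum.inl A)) (x s, fun a' => yc s (Sum.inr a')) a
      = pd2 L (Sum.inr a) (x s, yc s)
        - ∑ A, (pc s (Sum.inl A) - pd2 L (Sum.inl A) (x s, yc s))
            * pd2 (Ψ A) a (x s, fun a' => yc s (Sum.inr a')) := by
    intro s a
    unfold mom
    have h2 := S11.pd2_Ltil L Ψ (x s, fun a' => yc s (Sum.inr a'))
      (by rw [hGcy s]; exact hLd s) (fun A => hΨd s A) a
    rw [hGcy s] at h2
    rw [h2]
    simp only [sub_mul, Finset.sum_sub_distrib]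
    ring
  have hmomderiv : ∀ a : Fin k,
      deriv (fun s => mom (Ltil L Ψ) Ψ (fun A => pc s (Sum.inl A))
        (x s, fun a' => yc s (Sum.inr a')) a) t
      = deriv (fun s => pd2 L (Sum.inr a) (x s, yc s)) t
        - ∑ A, ((deriv (fun s => pc s (Sum.inl A)) t
                  - deriv (fun s => pd2 L (Sum.inl A) (x s, yc s)) t)
                * pd2 (Ψ A) a (x t, fun a' => yc t (Sum.inr a'))
              + (pc t (Sum.inl A) - pd2 L (Sum.inl A) (x t, yc t))
                * deriv (fun s => pd2 (Ψ A) a (x s, fun a' => yc s (Sum.inr a'))) t) := by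
    intro a
    have hg : ∀ A, DifferentiableAt ℝ
        (fun s => pc s (Sum.inl A) - pd2 L (Sum.inl A) (x s, yc s)) t :=
      fun A => (dpcd (Sum.inl A) t).sub (dL2d (Sum.inl A) t)
    have hh : ∀ A, DifferentiableAt ℝ
        (fun s => pd2 (Ψ A) a (x s, fun a' => yc s (Sum.inr a'))) t := fun A => dΨ2d A a t
    have hfun : (fun s => mom (Ltil L Ψ) Ψ (fun A => pc s (Sum.inl A))
        (x s, fun a' => yc s (Sum.inr a')) a)
        = fun s => pd2 L (Sum.inr a) (x s, yc s)
          - ∑ A, (pc s (Sum.inl A) - pd2 L (Sum.inl A) (x s, yc s))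
              * pd2 (Ψ A) a (x s, fun a' => yc s (Sum.inr a')) :=
      funext fun s => hmomfun s a
    rw [hfun]
    rw [deriv_fun_sub (dL2d (Sum.inr a) t)
      (DifferentiableAt.fun_sum fun A _ => ((hg A).fun_mul (hh A)))]
    rw [deriv_fun_sum (fun A _ => (hg A).fun_mul (hh A))]
    congr 1
    refine Finset.sum_congr rfl fun A _ => ?_
    rw [deriv_fun_mul (hg A) (hh A), deriv_fun_sub (dpcd (Sum.inl A) t) (dL2d (Sum.inl A) t)]
  -- phiA facts
  have hΨdP : ∀ A, DifferentiableAt ℝ (Ψ A) (S11.Pclm m mb k (x t, yc t)) := fun A => hΨd t A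
  have hphid1 : ∀ (A : Fin mb) (i : Fin m),
      pd1 (phiA Ψ A) i (x t, yc t) = -(pd1 (Ψ A) i (x t, fun a => yc t (Sum.inr a))) :=
    fun A i => S11.pd1_phiA Ψ A (x t, yc t) (hΨdP A) i
  have hphid2l : ∀ (A B : Fin mb) (s : ℝ),
      pd2 (phiA Ψ A) (Sum.inl B) (x s, yc s) = if A = B then 1 else 0 :=
    fun A B s => S11.pd2_phiA_inl Ψ A B (x s, yc s) (hΨd s A)
  have hphid2r : ∀ (A : Fin mb) (a : Fin k) (s : ℝ),
      pd2 (phiA Ψ A) (Sum.inr a) (x s, yc s)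
        = -(pd2 (Ψ A) a (x s, fun b => yc s (Sum.inr b))) :=
    fun A a s => S11.pd2_phiA_inr Ψ A a (x s, yc s) (hΨd s A)
  have hphiderivl : ∀ (A B : Fin mb),
      deriv (fun s => pd2 (phiA Ψ A) (Sum.inl B) (x s, yc s)) t = 0 := by
    intro A B
    rw [show (fun s => pd2 (phiA Ψ A) (Sum.inl B) (x s, yc s))
        = (fun _ => if A = B then (1:ℝ) else 0) from funext fun s => hphid2l A B s]
    exact deriv_const t _
  have hphiderivr : ∀ (A : Fin mb) (a : Fin k),
      deriv (fun s => pd2 (phiA Ψ A) (Sum.inr a) (x s, yc s)) t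
        = -(deriv (fun s => pd2 (Ψ A) a (x s, fun b => yc s (Sum.inr b))) t) := by
    intro A a
    rw [show (fun s => pd2 (phiA Ψ A) (Sum.inr a) (x s, yc s))
        = (fun s => -(pd2 (Ψ A) a (x s, fun b => yc s (Sum.inr b)))) from
      funext fun s => hphid2r A a s]
    exact deriv.neg
  have hderivsub : ∀ A : Fin mb,
      deriv (fun s => pc s (Sum.inl A) - pd2 L (Sum.inl A) (x s, yc s)) t
        = deriv (fun s => pc s (Sum.inl A)) t
          - deriv (fun s => pd2 L (Sum.inl A) (x s, yc s)) t := fun A =>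
    deriv_sub (dpcd (Sum.inl A) t) (dL2d (Sum.inl A) t)
  have hphi0 : ∀ A, phiA Ψ A (x t, yc t) = 0 := by
    intro A
    show yc t (Sum.inl A) - Ψ A (x t, fun a => yc t (Sum.inr a)) = 0
    rw [hcon t A]
    ring
  constructor
  · rintro ⟨v1, v2, v3⟩
    refine ⟨fun i => ?_, fun α => ?_, hphi0⟩
    · have h := v1 i
      simp only at h
      rw [h, hV1 i]
    · cases α with
      | inl A0 =>
          have h := v2 A0
          simp only at h
          simp only [hF1] at h
          rw [S11.sum_rearr (fun i => pd1 L i (x t, yc t)) (fun i => ρ (Sum.inl A0) i (x t))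
            (fun B => pd2 L (Sum.inl B) (x t, yc t)) (fun B => pc t (Sum.inl B))
            (fun B i => pd1 (Ψ B) i (x t, fun a => yc t (Sum.inr a)))] at h
          simp only [helim, hBr] at h
          simp only [hphiderivl, hphid1, hphid2l, hderivsub]
          simp only [mul_ite, mul_one, mul_zero, Finset.sum_ite_eq', Finset.mem_univ, if_true]
          simp only [deriv_const', zero_sub, sub_neg_eq_add, zero_add, mul_neg, neg_neg,
            Finset.sum_neg_distrib]
          linarith [h]
      | inr a0 =>
          have h := v3 a0
          simp only at h
          rw [hmomderiv a0] at h
          simp only [hF1] at h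
          rw [S11.sum_rearr (fun i => pd1 L i (x t, yc t)) (fun i => ρ (Sum.inr a0) i (x t))
            (fun B => pd2 L (Sum.inl B) (x t, yc t)) (fun B => pc t (Sum.inl B))
            (fun B i => pd1 (Ψ B) i (x t, fun a => yc t (Sum.inr a)))] at h
          simp only [helim, hBr] at h
          rw [Finset.sum_add_distrib] at h
          simp only [hphiderivr, hphid1, hphid2r, hderivsub]
          simp only [deriv.fun_neg, mul_neg, neg_neg, Finset.sum_neg_distrib, sub_neg_eq_add,
            neg_sub]
          have E1 : ∑ A, (pc t (Sum.inl A) - pd2 L (Sum.inl A) (x t, yc t)) *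
                (-(deriv (fun s => pd2 (Ψ A) a0 (x s, fun b => yc s (Sum.inr b))) t)
                  + ∑ i, ρ (Sum.inr a0) i (x t) * pd1 (Ψ A) i (x t, fun a => yc t (Sum.inr a)))
              = -(∑ A, (pc t (Sum.inl A) - pd2 L (Sum.inl A) (x t, yc t)) *
                    deriv (fun s => pd2 (Ψ A) a0 (x s, fun a' => yc s (Sum.inr a'))) t)
                + ∑ A, (pc t (Sum.inl A) - pd2 L (Sum.inl A) (x t, yc t)) *
                    ∑ i, ρ (Sum.inr a0) i (x t) * pd1 (Ψ A) i (x t, fun a => yc t (Sum.inr a)) := by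
            rw [← Finset.sum_neg_distrib, ← Finset.sum_add_distrib]
            exact Finset.sum_congr rfl fun A _ => by ring
          linarith [h, E1]
  · rintro ⟨m1, m2, m3⟩
    refine ⟨fun i => ?_, fun A0 => ?_, fun a0 => ?_⟩
    · have h := m1 i
      simp only
      rw [h, ← hV1 i]
    · have h := m2 (Sum.inl A0)
      simp only [hphiderivl, hphid1, hphid2l, hderivsub] at h
      simp only [mul_ite, mul_one, mul_zero, Finset.sum_ite_eq', Finset.mem_univ, if_true] at h
      simp only [deriv_const', zero_sub, sub_neg_eq_add, zero_add, mul_neg, neg_neg,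
        Finset.sum_neg_distrib] at h
      simp only
      simp only [hF1]
      rw [S11.sum_rearr (fun i => pd1 L i (x t, yc t)) (fun i => ρ (Sum.inl A0) i (x t))
        (fun B => pd2 L (Sum.inl B) (x t, yc t)) (fun B => pc t (Sum.inl B))
        (fun B i => pd1 (Ψ B) i (x t, fun a => yc t (Sum.inr a)))]
      simp only [helim, hBr]
      linarith [h]
    · have h := m2 (Sum.inr a0)
      simp only [hphiderivr, hphid1, hphid2r, hderivsub] at h
      simp only [deriv.fun_neg, mul_neg, neg_neg, Finset.sum_neg_distrib, sub_neg_eq_add,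
        neg_sub] at h
      have E1 : ∑ A, (pc t (Sum.inl A) - pd2 L (Sum.inl A) (x t, yc t)) *
            (-(deriv (fun s => pd2 (Ψ A) a0 (x s, fun b => yc s (Sum.inr b))) t)
              + ∑ i, ρ (Sum.inr a0) i (x t) * pd1 (Ψ A) i (x t, fun a => yc t (Sum.inr a)))
          = -(∑ A, (pc t (Sum.inl A) - pd2 L (Sum.inl A) (x t, yc t)) *
                deriv (fun s => pd2 (Ψ A) a0 (x s, fun a' => yc s (Sum.inr a'))) t)
            + ∑ A, (pc t (Sum.inl A) - pd2 L (Sum.inl A) (x t, yc t)) *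
                ∑ i, ρ (Sum.inr a0) i (x t) * pd1 (Ψ A) i (x t, fun a => yc t (Sum.inr a)) := by
        rw [← Finset.sum_neg_distrib, ← Finset.sum_add_distrib]
        exact Finset.sum_congr rfl fun A _ => by ring
      simp only
      rw [hmomderiv a0]
      simp only [hF1]
      rw [S11.sum_rearr (fun i => pd1 L i (x t, yc t)) (fun i => ρ (Sum.inr a0) i (x t))
        (fun B => pd2 L (Sum.inl B) (x t, yc t)) (fun B => pc t (Sum.inl B))
        (fun B i => pd1 (Ψ B) i (x t, fun a => yc t (Sum.inr a)))]
      simp only [helim, hBr]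
      rw [Finset.sum_add_distrib]
      linarith [h, E1]
end

section
/- Assume the setting of the context. Let t ↦ (x^i(t), y^a(t)) be a smooth curve on [t₀,t₁] with values in U × ℝ^{n−m̄} satisfying the admissibility condition ẋ^i = ρ^i_0 + Ψ^A ρ^i_A + y^a ρ^i_a (with y^A := Ψ^A(x,y^a) along the curve). Let t ↦ y_A(t) be a smooth solution of ẏ_A = (∂L̃/∂x^i − y_B ∂Ψ^B/∂x^i) ρ^i_A − y_γ(C^γ_{A0} + Ψ^B C^γ_{AB} + y^a C^γ_{Aa}), where y_a := ∂L̃/∂y^a − y_A ∂Ψ^A/∂y^a along the curve. Let X̄^α : [t₀,t₁] → ℝ be smooth functions with X̄^α(t₀) = X̄^α(t₁) = 0 satisfying the variation equations dX̄^A/dt = ρ^i_α X̄^α ∂Ψ^A/∂x^i + (dX̄^a/dt) ∂Ψ^A/∂y^a − (C^a_{γ0} + Ψ^B C^a_{γB} + y^b C^a_{γb}) X̄^γ ∂Ψ^A/∂y^a + (C^A_{γ0} + Ψ^B C^A_{γB} + y^b C^A_{γb}) X̄^γ. Set X̄^c_a = dX̄^a/dt − (C^a_{γ0} + Ψ^A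 C^a_{γA} + y^b C^a_{γb}) X̄^γ. Then ∫_{t₀}^{t₁} [ (∂L̃/∂x^i) ρ^i_A X̄^A + (∂L̃/∂x^i) ρ^i_a X̄^a + (∂L̃/∂y^a) X̄^c_a ] dt = ∫_{t₀}^{t₁} [ (∂L̃/∂x^i − y_A ∂Ψ^A/∂x^i) ρ^i_a − d/dt(∂L̃/∂y^a − y_A ∂Ψ^A/∂y^a) − y_γ(C^γ_{a0} + Ψ^B C^γ_{aB} + y^b C^γ_{ab}) ] X̄^a dt. In particular, the first variation of the action along variations tangent to the constraint submanifold vanishes for all such X̄ exactly when the vakonomic Euler–Lagrange expressions in the square bracket vanish along the curve. -/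

private lemma sum3_rot {α β γ : Type*} [Fintype α] [Fintype β] [Fintype γ]
    (f : α → β → γ → ℝ) :
    (∑ x, ∑ y, ∑ z, f x y z) = ∑ z, ∑ y, ∑ x, f x y z := by
  calc (∑ x, ∑ y, ∑ z, f x y z) = ∑ x, ∑ z, ∑ y, f x y z :=
        Finset.sum_congr rfl fun x _ => Finset.sum_comm
    _ = ∑ z, ∑ x, ∑ y, f x y z := Finset.sum_comm
    _ = ∑ z, ∑ y, ∑ x, f x y z := Finset.sum_congr rfl fun z _ => Finset.sum_comm

private lemma alg {mb k m : ℕ}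
    (Li : Fin m → ℝ) (La : Fin k → ℝ)
    (PsiI : Fin mb → Fin m → ℝ) (PsiA : Fin mb → Fin k → ℝ)
    (rho : (Fin mb ⊕ Fin k) → Fin m → ℝ)
    (Γ : (Fin mb ⊕ Fin k) → (Fin mb ⊕ Fin k) → ℝ)
    (p : (Fin mb ⊕ Fin k) → ℝ) (Xv X' : (Fin mb ⊕ Fin k) → ℝ)
    (mv' : Fin k → ℝ)
    (hmom : ∀ a, p (Sum.inr a) = La a - ∑ A, p (Sum.inl A) * PsiA A a) :
    (∑ A, ∑ i, Li i * rho (Sum.inl A) i * Xv (Sum.inl A))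
      + (∑ a, ∑ i, Li i * rho (Sum.inr a) i * Xv (Sum.inr a))
      + (∑ a, La a * (X' (Sum.inr a) - ∑ γ, Γ (Sum.inr a) γ * Xv γ))
    = (∑ a, ((∑ i, (Li i - ∑ A, p (Sum.inl A) * PsiI A i) * rho (Sum.inr a) i)
          - mv' a - ∑ γ, p γ * Γ γ (Sum.inr a)) * Xv (Sum.inr a))
      + ((∑ A, (((∑ i, (Li i - ∑ B, p (Sum.inl B) * PsiI B i) * rho (Sum.inl A) i)
            - ∑ γ, p γ * Γ γ (Sum.inl A)) * Xv (Sum.inl A)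
          + p (Sum.inl A) * ((∑ i, ∑ α, rho α i * Xv α * PsiI A i)
            + (∑ a, X' (Sum.inr a) * PsiA A a)
            - (∑ a, ∑ γ, Γ (Sum.inr a) γ * Xv γ * PsiA A a)
            + ∑ γ, Γ (Sum.inl A) γ * Xv γ)))
        + ∑ a, (mv' a * Xv (Sum.inr a) + p (Sum.inr a) * X' (Sum.inr a))) := by
  have h1 : (∑ x : Fin k, ∑ y : Fin mb, La x * Γ (Sum.inr x) (Sum.inl y) * Xv (Sum.inl y))
      = ∑ y : Fin mb, ∑ x : Fin k, La x * Γ (Sum.inr x) (Sum.inl y) * Xv (Sum.inl y) :=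
    Finset.sum_comm
  have h2 : (∑ x : Fin k, ∑ y : Fin k, La x * Γ (Sum.inr x) (Sum.inr y) * Xv (Sum.inr y))
      = ∑ y : Fin k, ∑ x : Fin k, La x * Γ (Sum.inr x) (Sum.inr y) * Xv (Sum.inr y) :=
    Finset.sum_comm
  have h3 : (∑ x : Fin k, ∑ y : Fin m, ∑ z : Fin mb,
        p (Sum.inl z) * PsiI z y * rho (Sum.inr x) y * Xv (Sum.inr x))
      = ∑ z : Fin mb, ∑ y : Fin m, ∑ x : Fin k,
        p (Sum.inl z) * rho (Sum.inr x) y * Xv (Sum.inr x) * PsiI z y :=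
    (sum3_rot _).trans (Finset.sum_congr rfl fun _ _ => Finset.sum_congr rfl fun _ _ =>
      Finset.sum_congr rfl fun _ _ => by ring)
  have h4 : (∑ x : Fin k, ∑ y : Fin mb,
        p (Sum.inl y) * Γ (Sum.inl y) (Sum.inr x) * Xv (Sum.inr x))
      = ∑ y : Fin mb, ∑ x : Fin k,
        p (Sum.inl y) * Γ (Sum.inl y) (Sum.inr x) * Xv (Sum.inr x) := Finset.sum_comm
  have h5 : (∑ x : Fin k, ∑ y : Fin k, ∑ z : Fin mb,
        p (Sum.inl z) * PsiA z y * Γ (Sum.inr y) (Sum.inr x) * Xv (Sum.inr x))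
      = ∑ z : Fin mb, ∑ y : Fin k, ∑ x : Fin k,
        p (Sum.inl z) * Γ (Sum.inr y) (Sum.inr x) * Xv (Sum.inr x) * PsiA z y :=
    (sum3_rot _).trans (Finset.sum_congr rfl fun _ _ => Finset.sum_congr rfl fun _ _ =>
      Finset.sum_congr rfl fun _ _ => by ring)
  have h6 : (∑ x : Fin mb, ∑ y : Fin m, ∑ z : Fin mb,
        p (Sum.inl z) * PsiI z y * rho (Sum.inl x) y * Xv (Sum.inl x))
      = ∑ z : Fin mb, ∑ y : Fin m, ∑ x : Fin mb,
        p (Sum.inl z) * rho (Sum.inl x) y * Xv (Sum.inl x) * PsiI z y :=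
    (sum3_rot _).trans (Finset.sum_congr rfl fun _ _ => Finset.sum_congr rfl fun _ _ =>
      Finset.sum_congr rfl fun _ _ => by ring)
  have h7 : (∑ x : Fin mb, ∑ y : Fin mb,
        p (Sum.inl y) * Γ (Sum.inl y) (Sum.inl x) * Xv (Sum.inl x))
      = ∑ y : Fin mb, ∑ x : Fin mb,
        p (Sum.inl y) * Γ (Sum.inl y) (Sum.inl x) * Xv (Sum.inl x) := Finset.sum_comm
  have h8 : (∑ x : Fin mb, ∑ y : Fin k, ∑ z : Fin mb,
        p (Sum.inl z) * PsiA z y * Γ (Sum.inr y) (Sum.inl x) * Xv (Sum.inl x))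
      = ∑ z : Fin mb, ∑ y : Fin k, ∑ x : Fin mb,
        p (Sum.inl z) * Γ (Sum.inr y) (Sum.inl x) * Xv (Sum.inl x) * PsiA z y :=
    (sum3_rot _).trans (Finset.sum_congr rfl fun _ _ => Finset.sum_congr rfl fun _ _ =>
      Finset.sum_congr rfl fun _ _ => by ring)
  have h9 : (∑ x : Fin k, ∑ y : Fin mb, p (Sum.inl y) * PsiA y x * X' (Sum.inr x))
      = ∑ y : Fin mb, ∑ x : Fin k, p (Sum.inl y) * X' (Sum.inr x) * PsiA y x :=
    Finset.sum_comm.trans (Finset.sum_congr rfl fun _ _ =>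
      Finset.sum_congr rfl fun _ _ => by ring)
  simp only [hmom, Fintype.sum_sum_type, Finset.mul_sum, Finset.sum_mul, sub_mul, mul_sub,
    Finset.sum_sub_distrib, Finset.sum_add_distrib, mul_add, add_mul, Finset.sum_neg_distrib]
  ring_nf
  ring_nf at h1 h2 h3 h4 h5 h6 h7 h8 h9
  linear_combination -h1 - h2 + h3 + h4 - h5 + h6 + h7 - h8 + h9
/-- Along an admissible curve of the constrained problem, with
momenta `y_A` solving the corresponding vakonomic momentum equation, the first
variation of the action along any infinitesimal variation `X̄` tangent to the
constraint submanifold, vanishing at the endpoints, equals the integral of the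
vakonomic Euler–Lagrange expressions against the free components `X̄ᵃ`.  In
particular it vanishes whenever the vakonomic Euler–Lagrange expressions vanish. -/
theorem stmt_12 (m mb k : ℕ) (hm : 0 < m) (hn : 0 < mb + k)
    (U : Set (Fin m → ℝ)) (hU : IsOpen U)
    (ρ0 : Fin m → (Fin m → ℝ) → ℝ)
    (ρ : (Fin mb ⊕ Fin k) → Fin m → (Fin m → ℝ) → ℝ)
    (C0 : (Fin mb ⊕ Fin k) → (Fin mb ⊕ Fin k) → (Fin m → ℝ) → ℝ)
    (C : (Fin mb ⊕ Fin k) → (Fin mb ⊕ Fin k) → (Fin mb ⊕ Fin k) → (Fin m → ℝ) → ℝ)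
    (hρ0 : ∀ i, ContDiffOn ℝ (⊤ : ℕ∞) (ρ0 i) U) (hρ : ∀ α i, ContDiffOn ℝ (⊤ : ℕ∞) (ρ α i) U)
    (hC0 : ∀ γ α, ContDiffOn ℝ (⊤ : ℕ∞) (C0 γ α) U)
    (hC : ∀ γ α β, ContDiffOn ℝ (⊤ : ℕ∞) (C γ α β) U)
    (hskew : ∀ x ∈ U, ∀ γ α β, C γ α β x = - C γ β α x)
    (Lt : (Fin m → ℝ) × (Fin k → ℝ) → ℝ)
    (hLt : ContDiffOn ℝ (⊤ : ℕ∞) Lt {q | q.1 ∈ U})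
    (Ψ : Fin mb → (Fin m → ℝ) × (Fin k → ℝ) → ℝ)
    (hΨ : ∀ A, ContDiffOn ℝ (⊤ : ℕ∞) (Ψ A) {q | q.1 ∈ U})
    (t₀ t₁ : ℝ) (ht : t₀ ≤ t₁)
    -- the smooth curve `t ↦ (xⁱ(t), yᵃ(t))` with values in `U × ℝ^{n−m̄}`
    (c : ℝ → Fin m → ℝ) (ya : ℝ → Fin k → ℝ)
    (hc : ContDiff ℝ (⊤ : ℕ∞) c) (hya : ContDiff ℝ (⊤ : ℕ∞) ya)
    (hmem : ∀ t ∈ Set.Icc t₀ t₁, c t ∈ U)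
    -- admissibility: `ẋⁱ = ρⁱ₀ + Ψᴬ ρⁱ_A + yᵃ ρⁱ_a` (with `yᴬ := Ψᴬ`)
    (hadm : ∀ t ∈ Set.Icc t₀ t₁, ∀ i, deriv (fun s => c s i) t
      = ρ0 i (c t) + (∑ A, Ψ A (c t, ya t) * ρ (Sum.inl A) i (c t))
        + ∑ a, ya t a * ρ (Sum.inr a) i (c t))
    -- the momenta `y_A`, a smooth solution of the momentum equation, where
    -- `y_a := ∂L̃/∂yᵃ − y_A ∂Ψᴬ/∂yᵃ` along the curve
    (pA : ℝ → Fin mb → ℝ) (hpA : ContDiff ℝ (⊤ : ℕ∞) pA)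
    (hpAeq : ∀ t ∈ Set.Icc t₀ t₁, ∀ A, deriv (fun s => pA s A) t
      = (∑ i, (pd1 Lt i (c t, ya t) - ∑ B, pA t B * pd1 (Ψ B) i (c t, ya t))
            * ρ (Sum.inl A) i (c t))
        - ∑ γ, Sum.elim (pA t) (mom Lt Ψ (pA t) (c t, ya t)) γ
            * (-(C0 γ (Sum.inl A) (c t))
               + (∑ B, Ψ B (c t, ya t) * C γ (Sum.inl A) (Sum.inl B) (c t))
               + ∑ a, ya t a * C γ (Sum.inl A) (Sum.inr a) (c t))) :
    -- For every smooth variation `X̄` vanishing at the endpoints and satisfying the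
    -- variation equations (tangency to the constraint submanifold) ...
    (∀ X : ℝ → (Fin mb ⊕ Fin k) → ℝ, ContDiff ℝ (⊤ : ℕ∞) X →
      (∀ α, X t₀ α = 0) → (∀ α, X t₁ α = 0) →
      (∀ t ∈ Set.Icc t₀ t₁, ∀ A, deriv (fun s => X s (Sum.inl A)) t
        = (∑ i, ∑ α, ρ α i (c t) * X t α * pd1 (Ψ A) i (c t, ya t))
          + (∑ a, deriv (fun s => X s (Sum.inr a)) t * pd2 (Ψ A) a (c t, ya t))
          - (∑ a, ∑ γ, (-(C0 (Sum.inr a) γ (c t))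
              + (∑ B, Ψ B (c t, ya t) * C (Sum.inr a) γ (Sum.inl B) (c t))
              + ∑ b, ya t b * C (Sum.inr a) γ (Sum.inr b) (c t))
                * X t γ * pd2 (Ψ A) a (c t, ya t))
          + ∑ γ, (-(C0 (Sum.inl A) γ (c t))
              + (∑ B, Ψ B (c t, ya t) * C (Sum.inl A) γ (Sum.inl B) (c t))
              + ∑ b, ya t b * C (Sum.inl A) γ (Sum.inr b) (c t)) * X t γ) →
      -- ... the first variation of the action equals the integral of the vakonomic
      -- Euler–Lagrange expressions against `X̄ᵃ`:
      (∫ t in t₀..t₁,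
        ((∑ A, ∑ i, pd1 Lt i (c t, ya t) * ρ (Sum.inl A) i (c t) * X t (Sum.inl A))
         + (∑ a, ∑ i, pd1 Lt i (c t, ya t) * ρ (Sum.inr a) i (c t) * X t (Sum.inr a))
         + ∑ a, pd2 Lt a (c t, ya t)
             * (deriv (fun s => X s (Sum.inr a)) t
                - ∑ γ, (-(C0 (Sum.inr a) γ (c t))
                    + (∑ A, Ψ A (c t, ya t) * C (Sum.inr a) γ (Sum.inl A) (c t))
                    + ∑ b, ya t b * C (Sum.inr a) γ (Sum.inr b) (c t)) * X t γ)))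
      = ∫ t in t₀..t₁,
          (∑ a, ((∑ i, (pd1 Lt i (c t, ya t) - ∑ A, pA t A * pd1 (Ψ A) i (c t, ya t))
                    * ρ (Sum.inr a) i (c t))
            - deriv (fun s => pd2 Lt a (c s, ya s)
                - ∑ A, pA s A * pd2 (Ψ A) a (c s, ya s)) t
            - ∑ γ, Sum.elim (pA t) (mom Lt Ψ (pA t) (c t, ya t)) γ
                * (-(C0 γ (Sum.inr a) (c t))
                   + (∑ B, Ψ B (c t, ya t) * C γ (Sum.inr a) (Sum.inl B) (c t))
                   + ∑ b, ya t b * C γ (Sum.inr a) (Sum.inr b) (c t)))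
            * X t (Sum.inr a)))
    ∧
    -- In particular, if the vakonomic Euler–Lagrange expressions vanish along the
    -- curve then the first variation vanishes for all such variations `X̄`.
    ((∀ t ∈ Set.Icc t₀ t₁, ∀ a,
        (∑ i, (pd1 Lt i (c t, ya t) - ∑ A, pA t A * pd1 (Ψ A) i (c t, ya t))
            * ρ (Sum.inr a) i (c t))
        - deriv (fun s => pd2 Lt a (c s, ya s)
            - ∑ A, pA s A * pd2 (Ψ A) a (c s, ya s)) t
        - ∑ γ, Sum.elim (pA t) (mom Lt Ψ (pA t) (c t, ya t)) γ
            * (-(C0 γ (Sum.inr a) (c t))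
               + (∑ B, Ψ B (c t, ya t) * C γ (Sum.inr a) (Sum.inl B) (c t))
               + ∑ b, ya t b * C γ (Sum.inr a) (Sum.inr b) (c t)) = 0) →
      ∀ X : ℝ → (Fin mb ⊕ Fin k) → ℝ, ContDiff ℝ (⊤ : ℕ∞) X →
      (∀ α, X t₀ α = 0) → (∀ α, X t₁ α = 0) →
      (∀ t ∈ Set.Icc t₀ t₁, ∀ A, deriv (fun s => X s (Sum.inl A)) t
        = (∑ i, ∑ α, ρ α i (c t) * X t α * pd1 (Ψ A) i (c t, ya t))
          + (∑ a, deriv (fun s => X s (Sum.inr a)) t * pd2 (Ψ A) a (c t, ya t))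
          - (∑ a, ∑ γ, (-(C0 (Sum.inr a) γ (c t))
              + (∑ B, Ψ B (c t, ya t) * C (Sum.inr a) γ (Sum.inl B) (c t))
              + ∑ b, ya t b * C (Sum.inr a) γ (Sum.inr b) (c t))
                * X t γ * pd2 (Ψ A) a (c t, ya t))
          + ∑ γ, (-(C0 (Sum.inl A) γ (c t))
              + (∑ B, Ψ B (c t, ya t) * C (Sum.inl A) γ (Sum.inl B) (c t))
              + ∑ b, ya t b * C (Sum.inl A) γ (Sum.inr b) (c t)) * X t γ) →
      (∫ t in t₀..t₁,
        ((∑ A, ∑ i, pd1 Lt i (c t, ya t) * ρ (Sum.inl A) i (c t) * X t (Sum.inl A))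
         + (∑ a, ∑ i, pd1 Lt i (c t, ya t) * ρ (Sum.inr a) i (c t) * X t (Sum.inr a))
         + ∑ a, pd2 Lt a (c t, ya t)
             * (deriv (fun s => X s (Sum.inr a)) t
                - ∑ γ, (-(C0 (Sum.inr a) γ (c t))
                    + (∑ A, Ψ A (c t, ya t) * C (Sum.inr a) γ (Sum.inl A) (c t))
                    + ∑ b, ya t b * C (Sum.inr a) γ (Sum.inr b) (c t)) * X t γ)))
      = 0) := by
  classical
  have hS : IsOpen {q : (Fin m → ℝ) × (Fin k → ℝ) | q.1 ∈ U} := hU.preimage continuous_fst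
  have hVo : IsOpen (c ⁻¹' U) := hU.preimage hc.continuous
  have hIccV : Set.Icc t₀ t₁ ⊆ c ⁻¹' U := fun t htI => hmem t htI
  have hIcceq : Set.uIcc t₀ t₁ = Set.Icc t₀ t₁ := Set.uIcc_of_le ht
  have hqV : ∀ g : (Fin m → ℝ) × (Fin k → ℝ) → ℝ,
      ContDiffOn ℝ (⊤ : ℕ∞) g {q : (Fin m → ℝ) × (Fin k → ℝ) | q.1 ∈ U} →
      ContDiffOn ℝ (⊤ : ℕ∞) (fun t => g (c t, ya t)) (c ⁻¹' U) := fun g hg =>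
    hg.comp ((hc.prodMk hya).contDiffOn) (fun t htI => htI)
  have hpd1S : ∀ (g : (Fin m → ℝ) × (Fin k → ℝ) → ℝ),
      ContDiffOn ℝ (⊤ : ℕ∞) g {q : (Fin m → ℝ) × (Fin k → ℝ) | q.1 ∈ U} → ∀ i,
      ContDiffOn ℝ (⊤ : ℕ∞) (pd1 g i) {q : (Fin m → ℝ) × (Fin k → ℝ) | q.1 ∈ U} := by
    intro g hg i
    have h1 : ContDiffOn ℝ (⊤ : ℕ∞) (fderiv ℝ g) {q : (Fin m → ℝ) × (Fin k → ℝ) | q.1 ∈ U} :=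
      hg.fderiv_of_isOpen hS (by simp)
    exact (ContinuousLinearMap.apply ℝ ℝ
      ((Pi.single i 1 : Fin m → ℝ), (0 : Fin k → ℝ))).contDiff.comp_contDiffOn h1
  have hpd2S : ∀ (g : (Fin m → ℝ) × (Fin k → ℝ) → ℝ),
      ContDiffOn ℝ (⊤ : ℕ∞) g {q : (Fin m → ℝ) × (Fin k → ℝ) | q.1 ∈ U} → ∀ a,
      ContDiffOn ℝ (⊤ : ℕ∞) (pd2 g a) {q : (Fin m → ℝ) × (Fin k → ℝ) | q.1 ∈ U} := by
    intro g hg a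
    have h1 : ContDiffOn ℝ (⊤ : ℕ∞) (fderiv ℝ g) {q : (Fin m → ℝ) × (Fin k → ℝ) | q.1 ∈ U} :=
      hg.fderiv_of_isOpen hS (by simp)
    exact (ContinuousLinearMap.apply ℝ ℝ
      ((0 : Fin m → ℝ), (Pi.single a 1 : Fin k → ℝ))).contDiff.comp_contDiffOn h1
  have hL1 : ∀ i, ContDiffOn ℝ (⊤ : ℕ∞) (fun t => pd1 Lt i (c t, ya t)) (c ⁻¹' U) :=
    fun i => hqV _ (hpd1S Lt hLt i)
  have hL2 : ∀ a, ContDiffOn ℝ (⊤ : ℕ∞) (fun t => pd2 Lt a (c t, ya t)) (c ⁻¹' U) :=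
    fun a => hqV _ (hpd2S Lt hLt a)
  have hP2 : ∀ A a, ContDiffOn ℝ (⊤ : ℕ∞) (fun t => pd2 (Ψ A) a (c t, ya t)) (c ⁻¹' U) :=
    fun A a => hqV _ (hpd2S (Ψ A) (hΨ A) a)
  have hΨV : ∀ A, ContDiffOn ℝ (⊤ : ℕ∞) (fun t => Ψ A (c t, ya t)) (c ⁻¹' U) :=
    fun A => hqV _ (hΨ A)
  have hρV : ∀ α i, ContDiffOn ℝ (⊤ : ℕ∞) (fun t => ρ α i (c t)) (c ⁻¹' U) :=
    fun α i => (hρ α i).comp hc.contDiffOn (fun t htI => htI)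
  have hC0V : ∀ α β, ContDiffOn ℝ (⊤ : ℕ∞) (fun t => C0 α β (c t)) (c ⁻¹' U) :=
    fun α β => (hC0 α β).comp hc.contDiffOn (fun t htI => htI)
  have hCV : ∀ α β γ, ContDiffOn ℝ (⊤ : ℕ∞) (fun t => C α β γ (c t)) (c ⁻¹' U) :=
    fun α β γ => (hC α β γ).comp hc.contDiffOn (fun t htI => htI)
  have hyaC : ∀ b, Continuous fun t => ya t b := fun b => (contDiff_pi.1 hya b).continuous
  have hpAc : ∀ A, ContDiff ℝ (⊤ : ℕ∞) (fun s => pA s A) := fun A => contDiff_pi.1 hpA A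
  have hmvsm : ∀ a, ContDiffOn ℝ (⊤ : ℕ∞)
      (fun s => pd2 Lt a (c s, ya s) - ∑ A, pA s A * pd2 (Ψ A) a (c s, ya s)) (c ⁻¹' U) :=
    fun a => (hL2 a).sub (ContDiffOn.sum fun A _ => ((hpAc A).contDiffOn).mul (hP2 A a))
  have hΓc : ∀ α β, ContinuousOn (fun t => -(C0 α β (c t))
      + (∑ A, Ψ A (c t, ya t) * C α β (Sum.inl A) (c t))
      + ∑ b, ya t b * C α β (Sum.inr b) (c t)) (c ⁻¹' U) := fun α β =>
    ((((hC0V α β).continuousOn).neg).add (continuousOn_finset_sum _ fun A _ =>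
        ((hΨV A).continuousOn).mul ((hCV α β (Sum.inl A)).continuousOn))).add
      (continuousOn_finset_sum _ fun b _ => (hyaC b).continuousOn.mul
        ((hCV α β (Sum.inr b)).continuousOn))
  have main :
    (∀ X : ℝ → (Fin mb ⊕ Fin k) → ℝ, ContDiff ℝ (⊤ : ℕ∞) X →
      (∀ α, X t₀ α = 0) → (∀ α, X t₁ α = 0) →
      (∀ t ∈ Set.Icc t₀ t₁, ∀ A, deriv (fun s => X s (Sum.inl A)) t
        = (∑ i, ∑ α, ρ α i (c t) * X t α * pd1 (Ψ A) i (c t, ya t))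
          + (∑ a, deriv (fun s => X s (Sum.inr a)) t * pd2 (Ψ A) a (c t, ya t))
          - (∑ a, ∑ γ, (-(C0 (Sum.inr a) γ (c t))
              + (∑ B, Ψ B (c t, ya t) * C (Sum.inr a) γ (Sum.inl B) (c t))
              + ∑ b, ya t b * C (Sum.inr a) γ (Sum.inr b) (c t))
                * X t γ * pd2 (Ψ A) a (c t, ya t))
          + ∑ γ, (-(C0 (Sum.inl A) γ (c t))
              + (∑ B, Ψ B (c t, ya t) * C (Sum.inl A) γ (Sum.inl B) (c t))
              + ∑ b, ya t b * C (Sum.inl A) γ (Sum.inr b) (c t)) * X t γ) →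
      -- ... the first variation of the action equals the integral of the vakonomic
      -- Euler–Lagrange expressions against `X̄ᵃ`:
      (∫ t in t₀..t₁,
        ((∑ A, ∑ i, pd1 Lt i (c t, ya t) * ρ (Sum.inl A) i (c t) * X t (Sum.inl A))
         + (∑ a, ∑ i, pd1 Lt i (c t, ya t) * ρ (Sum.inr a) i (c t) * X t (Sum.inr a))
         + ∑ a, pd2 Lt a (c t, ya t)
             * (deriv (fun s => X s (Sum.inr a)) t
                - ∑ γ, (-(C0 (Sum.inr a) γ (c t))
                    + (∑ A, Ψ A (c t, ya t) * C (Sum.inr a) γ (Sum.inl A) (c t))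
                    + ∑ b, ya t b * C (Sum.inr a) γ (Sum.inr b) (c t)) * X t γ)))
      = ∫ t in t₀..t₁,
          (∑ a, ((∑ i, (pd1 Lt i (c t, ya t) - ∑ A, pA t A * pd1 (Ψ A) i (c t, ya t))
                    * ρ (Sum.inr a) i (c t))
            - deriv (fun s => pd2 Lt a (c s, ya s)
                - ∑ A, pA s A * pd2 (Ψ A) a (c s, ya s)) t
            - ∑ γ, Sum.elim (pA t) (mom Lt Ψ (pA t) (c t, ya t)) γ
                * (-(C0 γ (Sum.inr a) (c t))
                   + (∑ B, Ψ B (c t, ya t) * C γ (Sum.inr a) (Sum.inl B) (c t))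
                   + ∑ b, ya t b * C γ (Sum.inr a) (Sum.inr b) (c t)))
            * X t (Sum.inr a))) := by
    intro X hX hX0 hX1 hvar
    have hXc : ∀ α, ContDiff ℝ (⊤ : ℕ∞) (fun s => X s α) := fun α => contDiff_pi.1 hX α
    have hXcont : ∀ α, Continuous fun t => X t α := fun α => (hXc α).continuous
    have hX'cont : ∀ α, Continuous (deriv (fun s => X s α)) :=
      fun α => (hXc α).continuous_deriv (by simp)
    set W : ℝ → ℝ := fun s => (∑ A, pA s A * X s (Sum.inl A))
        + ∑ a, (pd2 Lt a (c s, ya s) - ∑ A, pA s A * pd2 (Ψ A) a (c s, ya s))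
          * X s (Sum.inr a) with hWdef
    have hWsm : ContDiffOn ℝ (⊤ : ℕ∞) W (c ⁻¹' U) := ContDiffOn.add
      (ContDiffOn.sum fun A _ => ((hpAc A).contDiffOn).mul ((hXc (Sum.inl A)).contDiffOn))
      (ContDiffOn.sum fun a _ => (hmvsm a).mul ((hXc (Sum.inr a)).contDiffOn))
    have hWd : ∀ t ∈ c ⁻¹' U, HasDerivAt W
        ((∑ A, (deriv (fun s => pA s A) t * X t (Sum.inl A)
            + pA t A * deriv (fun s => X s (Sum.inl A)) t))
          + ∑ a, (deriv (fun s => pd2 Lt a (c s, ya s)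
                - ∑ A, pA s A * pd2 (Ψ A) a (c s, ya s)) t * X t (Sum.inr a)
              + (pd2 Lt a (c t, ya t) - ∑ A, pA t A * pd2 (Ψ A) a (c t, ya t))
                * deriv (fun s => X s (Sum.inr a)) t)) t := fun t htV =>
      HasDerivAt.add
        (HasDerivAt.fun_sum fun A _ =>
          ((((hpAc A).differentiable (by simp)).differentiableAt).hasDerivAt).mul
            ((((hXc (Sum.inl A)).differentiable (by simp)).differentiableAt).hasDerivAt))
        (HasDerivAt.fun_sum fun a _ =>
          (((((hmvsm a).differentiableOn (by simp)).differentiableAt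
              (hVo.mem_nhds htV))).hasDerivAt).mul
            ((((hXc (Sum.inr a)).differentiable (by simp)).differentiableAt).hasDerivAt))
    have hFc : ContinuousOn (fun t =>
        ((∑ A, ∑ i, pd1 Lt i (c t, ya t) * ρ (Sum.inl A) i (c t) * X t (Sum.inl A))
         + (∑ a, ∑ i, pd1 Lt i (c t, ya t) * ρ (Sum.inr a) i (c t) * X t (Sum.inr a))
         + ∑ a, pd2 Lt a (c t, ya t)
             * (deriv (fun s => X s (Sum.inr a)) t
                - ∑ γ, (-(C0 (Sum.inr a) γ (c t))
                    + (∑ A, Ψ A (c t, ya t) * C (Sum.inr a) γ (Sum.inl A) (c t))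
                    + ∑ b, ya t b * C (Sum.inr a) γ (Sum.inr b) (c t)) * X t γ))) (c ⁻¹' U) := by
      refine ContinuousOn.add (ContinuousOn.add ?_ ?_) ?_
      · exact continuousOn_finset_sum _ fun A _ => continuousOn_finset_sum _ fun i _ =>
          (((hL1 i).continuousOn).mul ((hρV (Sum.inl A) i).continuousOn)).mul
            (hXcont (Sum.inl A)).continuousOn
      · exact continuousOn_finset_sum _ fun a _ => continuousOn_finset_sum _ fun i _ =>
          (((hL1 i).continuousOn).mul ((hρV (Sum.inr a) i).continuousOn)).mul
            (hXcont (Sum.inr a)).continuousOn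
      · exact continuousOn_finset_sum _ fun a _ => ((hL2 a).continuousOn).mul
          (((hX'cont (Sum.inr a)).continuousOn).sub (continuousOn_finset_sum _ fun γ _ =>
            (hΓc (Sum.inr a) γ).mul (hXcont γ).continuousOn))
    have hFint : IntervalIntegrable (fun t =>
        ((∑ A, ∑ i, pd1 Lt i (c t, ya t) * ρ (Sum.inl A) i (c t) * X t (Sum.inl A))
         + (∑ a, ∑ i, pd1 Lt i (c t, ya t) * ρ (Sum.inr a) i (c t) * X t (Sum.inr a))
         + ∑ a, pd2 Lt a (c t, ya t)
             * (deriv (fun s => X s (Sum.inr a)) t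
                - ∑ γ, (-(C0 (Sum.inr a) γ (c t))
                    + (∑ A, Ψ A (c t, ya t) * C (Sum.inr a) γ (Sum.inl A) (c t))
                    + ∑ b, ya t b * C (Sum.inr a) γ (Sum.inr b) (c t)) * X t γ))) MeasureTheory.volume t₀ t₁ :=
      (hFc.mono (by rw [hIcceq]; exact hIccV)).intervalIntegrable
    have hdWc : ContDiffOn ℝ (⊤ : ℕ∞) (deriv W) (c ⁻¹' U) := hWsm.deriv_of_isOpen hVo (by simp)
    have hdWint : IntervalIntegrable (deriv W) MeasureTheory.volume t₀ t₁ :=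
      (hdWc.continuousOn.mono (by rw [hIcceq]; exact hIccV)).intervalIntegrable
    have hWt0 : W t₀ = 0 := by simp [hWdef, hX0]
    have hWt1 : W t₁ = 0 := by simp [hWdef, hX1]
    have hderint : (∫ t in t₀..t₁, deriv W t) = 0 := by
      rw [intervalIntegral.integral_deriv_eq_sub
        (fun x hx => ((hWd x (hIccV (by rwa [hIcceq] at hx))).differentiableAt)) hdWint,
        hWt0, hWt1, sub_zero]
    have hkey : ∀ t ∈ Set.Icc t₀ t₁,
        (∑ a, ((∑ i, (pd1 Lt i (c t, ya t) - ∑ A, pA t A * pd1 (Ψ A) i (c t, ya t))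
                    * ρ (Sum.inr a) i (c t))
            - deriv (fun s => pd2 Lt a (c s, ya s)
                - ∑ A, pA s A * pd2 (Ψ A) a (c s, ya s)) t
            - ∑ γ, Sum.elim (pA t) (mom Lt Ψ (pA t) (c t, ya t)) γ
                * (-(C0 γ (Sum.inr a) (c t))
                   + (∑ B, Ψ B (c t, ya t) * C γ (Sum.inr a) (Sum.inl B) (c t))
                   + ∑ b, ya t b * C γ (Sum.inr a) (Sum.inr b) (c t)))
            * X t (Sum.inr a))
        = ((∑ A, ∑ i, pd1 Lt i (c t, ya t) * ρ (Sum.inl A) i (c t) * X t (Sum.inl A))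
         + (∑ a, ∑ i, pd1 Lt i (c t, ya t) * ρ (Sum.inr a) i (c t) * X t (Sum.inr a))
         + ∑ a, pd2 Lt a (c t, ya t)
             * (deriv (fun s => X s (Sum.inr a)) t
                - ∑ γ, (-(C0 (Sum.inr a) γ (c t))
                    + (∑ A, Ψ A (c t, ya t) * C (Sum.inr a) γ (Sum.inl A) (c t))
                    + ∑ b, ya t b * C (Sum.inr a) γ (Sum.inr b) (c t)) * X t γ)) - deriv W t := by
      intro t htI
      rw [(hWd t (hIccV htI)).deriv]
      have halg := alg
        (Li := fun i => pd1 Lt i (c t, ya t)) (La := fun a => pd2 Lt a (c t, ya t))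
        (PsiI := fun A i => pd1 (Ψ A) i (c t, ya t))
        (PsiA := fun A a => pd2 (Ψ A) a (c t, ya t))
        (rho := fun α i => ρ α i (c t))
        (Γ := fun α β => -(C0 α β (c t)) + (∑ B, Ψ B (c t, ya t) * C α β (Sum.inl B) (c t))
            + ∑ b, ya t b * C α β (Sum.inr b) (c t))
        (p := Sum.elim (pA t) (mom Lt Ψ (pA t) (c t, ya t)))
        (Xv := X t) (X' := fun α => deriv (fun s => X s α) t)
        (mv' := fun a => deriv (fun s => pd2 Lt a (c s, ya s)
            - ∑ A, pA s A * pd2 (Ψ A) a (c s, ya s)) t)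
        (hmom := fun a => rfl)
      simp only [Sum.elim_inl, Sum.elim_inr, mom] at halg
      simp only [hpAeq t htI, hvar t htI]
      linear_combination -halg
    have hGF : (∫ t in t₀..t₁,
        (∑ a, ((∑ i, (pd1 Lt i (c t, ya t) - ∑ A, pA t A * pd1 (Ψ A) i (c t, ya t))
                    * ρ (Sum.inr a) i (c t))
            - deriv (fun s => pd2 Lt a (c s, ya s)
                - ∑ A, pA s A * pd2 (Ψ A) a (c s, ya s)) t
            - ∑ γ, Sum.elim (pA t) (mom Lt Ψ (pA t) (c t, ya t)) γ
                * (-(C0 γ (Sum.inr a) (c t))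
                   + (∑ B, Ψ B (c t, ya t) * C γ (Sum.inr a) (Sum.inl B) (c t))
                   + ∑ b, ya t b * C γ (Sum.inr a) (Sum.inr b) (c t)))
            * X t (Sum.inr a)))
        = (∫ t in t₀..t₁,
        ((∑ A, ∑ i, pd1 Lt i (c t, ya t) * ρ (Sum.inl A) i (c t) * X t (Sum.inl A))
         + (∑ a, ∑ i, pd1 Lt i (c t, ya t) * ρ (Sum.inr a) i (c t) * X t (Sum.inr a))
         + ∑ a, pd2 Lt a (c t, ya t)
             * (deriv (fun s => X s (Sum.inr a)) t
                - ∑ γ, (-(C0 (Sum.inr a) γ (c t))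
                    + (∑ A, Ψ A (c t, ya t) * C (Sum.inr a) γ (Sum.inl A) (c t))
                    + ∑ b, ya t b * C (Sum.inr a) γ (Sum.inr b) (c t)) * X t γ))) - ∫ t in t₀..t₁, deriv W t := by
      rw [← intervalIntegral.integral_sub hFint hdWint]
      exact intervalIntegral.integral_congr (fun t htI => hkey t (by rwa [hIcceq] at htI))
    rw [hGF, hderint, sub_zero]
  refine ⟨main, ?_⟩
  intro hEL X hX h0 h1 hv
  rw [main X hX h0 h1 hv]
  have hz : Set.EqOn (fun t =>
      (∑ a, ((∑ i, (pd1 Lt i (c t, ya t) - ∑ A, pA t A * pd1 (Ψ A) i (c t, ya t))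
                    * ρ (Sum.inr a) i (c t))
            - deriv (fun s => pd2 Lt a (c s, ya s)
                - ∑ A, pA s A * pd2 (Ψ A) a (c s, ya s)) t
            - ∑ γ, Sum.elim (pA t) (mom Lt Ψ (pA t) (c t, ya t)) γ
                * (-(C0 γ (Sum.inr a) (c t))
                   + (∑ B, Ψ B (c t, ya t) * C γ (Sum.inr a) (Sum.inl B) (c t))
                   + ∑ b, ya t b * C γ (Sum.inr a) (Sum.inr b) (c t)))
            * X t (Sum.inr a))) (fun _ => (0:ℝ)) (Set.uIcc t₀ t₁) := fun t htI =>
    Finset.sum_eq_zero fun a _ => by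
      rw [hEL t (by rwa [hIcceq] at htI) a, zero_mul]
  rw [intervalIntegral.integral_congr hz, intervalIntegral.integral_zero]
end

section
/- Fix positive integers m, n; indices i ∈ {1,…,m}, α,β,γ ∈ {1,…,n}; repeated indices summed. Let ρ^i_0, ρ^i_α, C^γ_{0α}, C^γ_{αβ} be smooth functions on an open set U ⊆ ℝ^m with C^γ_{αβ} = −C^γ_{βα}, C^γ_{α0} := −C^γ_{0α}, and let L = L(x^i, y^α) be a smooth Lagrangian on U × ℝⁿ. Let t ↦ (x^i(t), y^α(t)) be a smooth admissible curve on [t₀,t₁], i.e. ẋ^i = ρ^i_0 + y^α ρ^i_α. For any smooth functions u^α : [t₀,t₁] → ℝ with u^α(t₀) = u^α(t₁) = 0, setting u^c_α := du^α/dt − (C^α_{γ0} + y^β C^α_{γβ}) u^γ, one has ∫_{t₀}^{t₁} [ (∂L/∂x^i) ρ^i_α u^α + (∂L/∂y^α) u^c_α ] dt = ∫_{t₀}^{t₁} [ ρ^i_α ∂L/∂x^i − d/dt(∂L/∂y^α) − (C^γ_{α0} + C^γ_{αβ} y^β) ∂L/∂y^γ ] u^α dt. Consequently, the first variation of the action S(a)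 = ∫ L dt along complete lifts of sections vanishing at the endpoints vanishes for all such u if and only if the curve satisfies the Euler–Lagrange equations d/dt(∂L/∂y^α) = ρ^i_α ∂L/∂x^i − (C^γ_{α0} + C^γ_{αβ} y^β) ∂L/∂y^γ. -/
/-- Variational characterization of the Euler–Lagrange equations on
a Lie affgebroid, in local coordinates: along a smooth admissible curve, the first
variation of the action along the complete lift of a section vanishing at the base
endpoints equals the integral of the Euler–Lagrange expressions against the section;
consequently the first variation vanishes for all such variations iff the curve
satisfies the Euler–Lagrange equations.  (`C^α_{γ0} := −C^α_{0γ}` throughout.) -/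
theorem stmt_13 (m n : ℕ) (hm : 0 < m) (hn : 0 < n)
    (U : Set (Fin m → ℝ)) (hU : IsOpen U)
    (ρ0 : Fin m → (Fin m → ℝ) → ℝ) (ρ : Fin n → Fin m → (Fin m → ℝ) → ℝ)
    (C0 : Fin n → Fin n → (Fin m → ℝ) → ℝ)
    (C : Fin n → Fin n → Fin n → (Fin m → ℝ) → ℝ)
    (hρ0 : ∀ i, ContDiffOn ℝ (⊤ : ℕ∞) (ρ0 i) U) (hρ : ∀ α i, ContDiffOn ℝ (⊤ : ℕ∞) (ρ α i) U)
    (hC0 : ∀ γ α, ContDiffOn ℝ (⊤ : ℕ∞) (C0 γ α) U)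
    (hC : ∀ γ α β, ContDiffOn ℝ (⊤ : ℕ∞) (C γ α β) U)
    (hskew : ∀ x ∈ U, ∀ γ α β, C γ α β x = - C γ β α x)
    (L : (Fin m → ℝ) × (Fin n → ℝ) → ℝ)
    (hL : ContDiffOn ℝ (⊤ : ℕ∞) L {q | q.1 ∈ U})
    (t₀ t₁ : ℝ) (ht : t₀ < t₁)
    -- a smooth admissible curve `t ↦ (xⁱ(t), y^α(t))`, i.e. `ẋⁱ = ρⁱ₀ + y^α ρⁱ_α`
    (c : ℝ → Fin m → ℝ) (y : ℝ → Fin n → ℝ)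
    (hc : ContDiff ℝ (⊤ : ℕ∞) c) (hy : ContDiff ℝ (⊤ : ℕ∞) y)
    (hmem : ∀ t ∈ Set.Icc t₀ t₁, c t ∈ U)
    (hadm : ∀ t ∈ Set.Icc t₀ t₁, ∀ i, deriv (fun s => c s i) t
      = ρ0 i (c t) + ∑ α, y t α * ρ α i (c t)) :
    -- (1) the first-variation identity, for each variation `u` vanishing at the endpoints,
    -- with `u^c_α := du^α/dt − (C^α_{γ0} + y^β C^α_{γβ}) u^γ`
    (∀ u : ℝ → Fin n → ℝ, ContDiff ℝ (⊤ : ℕ∞) u →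
      (∀ α, u t₀ α = 0) → (∀ α, u t₁ α = 0) →
      (∫ t in t₀..t₁,
        ((∑ i, ∑ α, pd1 L i (c t, y t) * ρ α i (c t) * u t α)
         + ∑ α, pd2 L α (c t, y t)
             * (deriv (fun s => u s α) t
                - ∑ γ, (-(C0 α γ (c t)) + ∑ β, y t β * C α γ β (c t)) * u t γ)))
      = ∫ t in t₀..t₁,
          (∑ α, ((∑ i, ρ α i (c t) * pd1 L i (c t, y t))
            - deriv (fun s => pd2 L α (c s, y s)) t
            - ∑ γ, (-(C0 γ α (c t)) + ∑ β, C γ α β (c t) * y t β)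
                * pd2 L γ (c t, y t)) * u t α)) ∧
    -- (2) the first variation vanishes for all such `u` iff the curve satisfies the
    -- Euler–Lagrange equations on `[t₀, t₁]`
    ((∀ u : ℝ → Fin n → ℝ, ContDiff ℝ (⊤ : ℕ∞) u →
      (∀ α, u t₀ α = 0) → (∀ α, u t₁ α = 0) →
      (∫ t in t₀..t₁,
        ((∑ i, ∑ α, pd1 L i (c t, y t) * ρ α i (c t) * u t α)
         + ∑ α, pd2 L α (c t, y t)
             * (deriv (fun s => u s α) t
                - ∑ γ, (-(C0 α γ (c t)) + ∑ β, y t β * C α γ β (c t)) * u t γ)))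
      = 0)
    ↔ (∀ t ∈ Set.Icc t₀ t₁, ∀ α,
        deriv (fun s => pd2 L α (c s, y s)) t
          = (∑ i, ρ α i (c t) * pd1 L i (c t, y t))
            - ∑ γ, (-(C0 γ α (c t)) + ∑ β, C γ α β (c t) * y t β)
                * pd2 L γ (c t, y t))) := by
  classical
  have hOopen : IsOpen {q : (Fin m → ℝ) × (Fin n → ℝ) | q.1 ∈ U} :=
    hU.preimage continuous_fst
  set V : Set ℝ := c ⁻¹' U with hVdef
  have hVopen : IsOpen V := hU.preimage hc.continuous
  have hIccV : Set.Icc t₀ t₁ ⊆ V := fun t ht' => hmem t ht'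
  have hcy : ContDiff ℝ (⊤ : ℕ∞) (fun t => (c t, y t)) := hc.prodMk hy
  have hmaps : ∀ t ∈ V, (c t, y t) ∈ {q : (Fin m → ℝ) × (Fin n → ℝ) | q.1 ∈ U} :=
    fun t ht' => ht'
  have hfd : ContDiffOn ℝ (⊤ : ℕ∞) (fun q => fderiv ℝ L q)
      {q : (Fin m → ℝ) × (Fin n → ℝ) | q.1 ∈ U} :=
    hL.fderiv_of_isOpen hOopen (by simp)
  have hpd1 : ∀ i, ContDiffOn ℝ (⊤ : ℕ∞) (pd1 L i) {q : (Fin m → ℝ) × (Fin n → ℝ) | q.1 ∈ U} :=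
    fun i => hfd.clm_apply contDiffOn_const
  have hpd2 : ∀ α, ContDiffOn ℝ (⊤ : ℕ∞) (pd2 L α) {q : (Fin m → ℝ) × (Fin n → ℝ) | q.1 ∈ U} :=
    fun α => hfd.clm_apply contDiffOn_const
  have hG : ∀ α, ContDiffOn ℝ (⊤ : ℕ∞) (fun t => pd2 L α (c t, y t)) V :=
    fun α => (hpd2 α).comp hcy.contDiffOn hmaps
  have hGdiff : ∀ α, ∀ t ∈ V, HasDerivAt (fun s => pd2 L α (c s, y s))
      (deriv (fun s => pd2 L α (c s, y s)) t) t := fun α t htV =>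
    (((hG α).contDiffAt (hVopen.mem_nhds htV)).differentiableAt (by simp)).hasDerivAt
  have hG'cont : ∀ α, ContinuousOn (deriv (fun s => pd2 L α (c s, y s))) V :=
    fun α => (hG α).continuousOn_deriv_of_isOpen hVopen (by simp)
  have cont_pd1 : ∀ i, ContinuousOn (fun t => pd1 L i (c t, y t)) V :=
    fun i => ((hpd1 i).continuousOn.comp hcy.continuous.continuousOn hmaps)
  have cont_pd2 : ∀ α, ContinuousOn (fun t => pd2 L α (c t, y t)) V :=
    fun α => (hG α).continuousOn
  have cont_ρ : ∀ α i, ContinuousOn (fun t => ρ α i (c t)) V :=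
    fun α i => (hρ α i).continuousOn.comp hc.continuous.continuousOn (fun t ht' => ht')
  have cont_C0 : ∀ γ α, ContinuousOn (fun t => C0 γ α (c t)) V :=
    fun γ α => (hC0 γ α).continuousOn.comp hc.continuous.continuousOn (fun t ht' => ht')
  have cont_C : ∀ γ α β, ContinuousOn (fun t => C γ α β (c t)) V :=
    fun γ α β => (hC γ α β).continuousOn.comp hc.continuous.continuousOn (fun t ht' => ht')
  set E : Fin n → ℝ → ℝ := fun α t =>
      (∑ i, ρ α i (c t) * pd1 L i (c t, y t))
        - deriv (fun s => pd2 L α (c s, y s)) t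
        - ∑ γ, (-(C0 γ α (c t)) + ∑ β, C γ α β (c t) * y t β)
            * pd2 L γ (c t, y t) with hEdef
  have cont_E : ∀ α, ContinuousOn (E α) V := by
    intro α
    rw [hEdef]
    refine ContinuousOn.sub (ContinuousOn.sub ?_ (hG'cont α)) ?_
    · exact continuousOn_finset_sum _ fun i _ => (cont_ρ α i).mul (cont_pd1 i)
    · refine continuousOn_finset_sum _ fun γ _ => ContinuousOn.mul ?_ (cont_pd2 γ)
      refine ContinuousOn.add (cont_C0 γ α).neg ?_
      exact continuousOn_finset_sum _ fun β _ =>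
        (cont_C γ α β).mul (contDiff_pi.mp hy β).continuous.continuousOn
  -- Part (1)
  have part1 : ∀ u : ℝ → Fin n → ℝ, ContDiff ℝ (⊤ : ℕ∞) u →
      (∀ α, u t₀ α = 0) → (∀ α, u t₁ α = 0) →
      (∫ t in t₀..t₁,
        ((∑ i, ∑ α, pd1 L i (c t, y t) * ρ α i (c t) * u t α)
         + ∑ α, pd2 L α (c t, y t)
             * (deriv (fun s => u s α) t
                - ∑ γ, (-(C0 α γ (c t)) + ∑ β, y t β * C α γ β (c t)) * u t γ)))
      = ∫ t in t₀..t₁, (∑ α, E α t * u t α) := by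
    intro u hu hu0 hu1
    have hu' : ∀ α, ContDiff ℝ (⊤ : ℕ∞) (fun s => u s α) := fun α => contDiff_pi.mp hu α
    have hudiff : ∀ α t, HasDerivAt (fun s => u s α) (deriv (fun s => u s α) t) t :=
      fun α t => ((hu' α).differentiable (by simp) t).hasDerivAt
    have hDderiv : ∀ t ∈ V, HasDerivAt (fun s => ∑ α, pd2 L α (c s, y s) * u s α)
        (∑ α, (deriv (fun s => pd2 L α (c s, y s)) t * u t α
          + pd2 L α (c t, y t) * deriv (fun s => u s α) t)) t := by
      intro t htV
      exact HasDerivAt.fun_sum fun α _ => (hGdiff α t htV).mul (hudiff α t)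
    have hD_int : IntervalIntegrable (fun t =>
        ∑ α, (deriv (fun s => pd2 L α (c s, y s)) t * u t α
          + pd2 L α (c t, y t) * deriv (fun s => u s α) t))
        MeasureTheory.volume t₀ t₁ := by
      apply ContinuousOn.intervalIntegrable
      rw [Set.uIcc_of_le ht.le]
      refine continuousOn_finset_sum _ fun α _ => ContinuousOn.add ?_ ?_
      · exact ((hG'cont α).mono hIccV).mul (hu' α).continuous.continuousOn
      · exact ((cont_pd2 α).mono hIccV).mul ((hu' α).continuous_deriv (by simp)).continuousOn
    have hG_int : IntervalIntegrable (fun t => ∑ α, E α t * u t α)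
        MeasureTheory.volume t₀ t₁ := by
      apply ContinuousOn.intervalIntegrable
      rw [Set.uIcc_of_le ht.le]
      exact continuousOn_finset_sum _ fun α _ =>
        ((cont_E α).mono hIccV).mul (hu' α).continuous.continuousOn
    have hFTC : (∫ t in t₀..t₁,
        ∑ α, (deriv (fun s => pd2 L α (c s, y s)) t * u t α
          + pd2 L α (c t, y t) * deriv (fun s => u s α) t)) = 0 := by
      rw [intervalIntegral.integral_eq_sub_of_hasDerivAt
        (fun x hx => hDderiv x (hIccV (by rwa [Set.uIcc_of_le ht.le] at hx))) hD_int]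
      simp [hu0, hu1]
    have hQeq : ∀ t (γ α : Fin n), (-(C0 γ α (c t)) + ∑ β, y t β * C γ α β (c t))
        = (-(C0 γ α (c t)) + ∑ β, C γ α β (c t) * y t β) := by
      intro t γ α; congr 1; exact Finset.sum_congr rfl fun β _ => mul_comm _ _
    have hFG : ∀ t, ((∑ i, ∑ α, pd1 L i (c t, y t) * ρ α i (c t) * u t α)
         + ∑ α, pd2 L α (c t, y t) * (deriv (fun s => u s α) t
                - ∑ γ, (-(C0 α γ (c t)) + ∑ β, y t β * C α γ β (c t)) * u t γ))
        = (∑ α, E α t * u t α)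
          + ∑ α, (deriv (fun s => pd2 L α (c s, y s)) t * u t α
            + pd2 L α (c t, y t) * deriv (fun s => u s α) t) := by
      intro t
      have e1 : (∑ i, ∑ α, pd1 L i (c t, y t) * ρ α i (c t) * u t α)
          = ∑ α, (∑ i, ρ α i (c t) * pd1 L i (c t, y t)) * u t α := by
        rw [Finset.sum_comm]
        refine Finset.sum_congr rfl fun α _ => ?_
        rw [Finset.sum_mul]
        exact Finset.sum_congr rfl fun i _ => by ring
      have e3 : (∑ α, pd2 L α (c t, y t)
            * ∑ γ, (-(C0 α γ (c t)) + ∑ β, y t β * C α γ β (c t)) * u t γ)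
          = ∑ α, (∑ γ, (-(C0 γ α (c t)) + ∑ β, C γ α β (c t) * y t β)
              * pd2 L γ (c t, y t)) * u t α := by
        simp_rw [Finset.mul_sum]
        rw [Finset.sum_comm]
        refine Finset.sum_congr rfl fun α _ => ?_
        rw [Finset.sum_mul]
        refine Finset.sum_congr rfl fun γ _ => ?_
        rw [← hQeq t γ α]; ring
      rw [hEdef]
      simp only [mul_sub, Finset.sum_sub_distrib]
      rw [e1, e3]
      simp only [sub_mul, Finset.sum_sub_distrib, Finset.sum_add_distrib]
      ring
    calc (∫ t in t₀..t₁,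
        ((∑ i, ∑ α, pd1 L i (c t, y t) * ρ α i (c t) * u t α)
         + ∑ α, pd2 L α (c t, y t)
             * (deriv (fun s => u s α) t
                - ∑ γ, (-(C0 α γ (c t)) + ∑ β, y t β * C α γ β (c t)) * u t γ)))
        = ∫ t in t₀..t₁, ((∑ α, E α t * u t α)
            + ∑ α, (deriv (fun s => pd2 L α (c s, y s)) t * u t α
              + pd2 L α (c t, y t) * deriv (fun s => u s α) t)) :=
          intervalIntegral.integral_congr fun t _ => hFG t
      _ = (∫ t in t₀..t₁, ∑ α, E α t * u t α)
          + ∫ t in t₀..t₁, ∑ α, (deriv (fun s => pd2 L α (c s, y s)) t * u t α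
              + pd2 L α (c t, y t) * deriv (fun s => u s α) t) :=
          intervalIntegral.integral_add hG_int hD_int
      _ = ∫ t in t₀..t₁, ∑ α, E α t * u t α := by rw [hFTC, add_zero]
  constructor
  · intro u hu hu0 hu1
    rw [part1 u hu hu0 hu1, hEdef]
  constructor
  · -- variation vanishes → EL
    intro hvan t' ht' α
    by_contra hne
    have hEne : E α t' ≠ 0 := by
      simp only [hEdef]
      intro h0
      exact hne (by linarith)
    have ht'V : t' ∈ V := hIccV ht'
    have ht'0 : t₀ ≤ t' := ht'.1
    have ht'1 : t' ≤ t₁ := ht'.2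
    -- analytic test functions built from polynomials
    have hpoly : ∀ p : Polynomial ℝ, ContDiff ℝ (⊤ : ℕ∞) fun t : ℝ => Polynomial.eval t p := by
      intro p
      induction p using Polynomial.induction_on' with
      | add p q hp hq => simpa using hp.add hq
      | monomial k a =>
          simpa [Polynomial.eval_monomial] using contDiff_const.mul (contDiff_id.pow k)
    have hw : ContDiff ℝ (⊤ : ℕ∞) fun t : ℝ => (t - t₀) * (t₁ - t) :=
      (contDiff_id.sub contDiff_const).mul (contDiff_const.sub contDiff_id)
    -- all polynomial moments of `w * E α` vanish
    have hmom : ∀ p : Polynomial ℝ,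
        (∫ t in t₀..t₁, ((t - t₀) * (t₁ - t) * E α t) * Polynomial.eval t p) = 0 := by
      intro p
      set u : ℝ → Fin n → ℝ := fun t γ =>
        (t - t₀) * (t₁ - t) * Polynomial.eval t p * (if γ = α then 1 else 0) with hudef
      have hu : ContDiff ℝ (⊤ : ℕ∞) u :=
        contDiff_pi.mpr fun γ => (hw.mul (hpoly p)).mul contDiff_const
      have hu0 : ∀ γ, u t₀ γ = 0 := fun γ => by simp [hudef]
      have hu1 : ∀ γ, u t₁ γ = 0 := fun γ => by simp [hudef]
      have hGu : ∀ t, (∑ γ, E γ t * u t γ)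
          = ((t - t₀) * (t₁ - t) * E α t) * Polynomial.eval t p := by
        intro t
        rw [Finset.sum_eq_single α (fun b _ hb => by simp [hudef, hb])
          (fun h => absurd (Finset.mem_univ α) h)]
        simp [hudef]
        ring
      calc (∫ t in t₀..t₁, ((t - t₀) * (t₁ - t) * E α t) * Polynomial.eval t p)
          = ∫ t in t₀..t₁, (∑ γ, E γ t * u t γ) :=
            intervalIntegral.integral_congr fun t _ => (hGu t).symm
        _ = 0 := by rw [← part1 u hu hu0 hu1]; exact hvan u hu hu0 hu1
    -- `w * E α` is continuous and bounded on `[t₀, t₁]`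
    have hcon : ContinuousOn (fun t => (t - t₀) * (t₁ - t) * E α t) (Set.Icc t₀ t₁) :=
      (((continuous_id.sub continuous_const).mul
        (continuous_const.sub continuous_id)).continuousOn).mul ((cont_E α).mono hIccV)
    obtain ⟨M, hM⟩ := isCompact_Icc.exists_bound_of_continuousOn hcon
    have hM0 : 0 ≤ M :=
      le_trans (norm_nonneg _) (hM t₀ (Set.left_mem_Icc.mpr ht.le))
    have hsqint : IntervalIntegrable (fun t => ((t - t₀) * (t₁ - t) * E α t)^2)
        MeasureTheory.volume t₀ t₁ := by
      apply ContinuousOn.intervalIntegrable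
      rw [Set.uIcc_of_le ht.le]
      exact hcon.pow 2
    -- the square integrates to zero, by Weierstrass approximation
    have hI0 : (∫ t in t₀..t₁, ((t - t₀) * (t₁ - t) * E α t)^2) = 0 := by
      have hnonneg : 0 ≤ ∫ t in t₀..t₁, ((t - t₀) * (t₁ - t) * E α t)^2 :=
        intervalIntegral.integral_nonneg ht.le (fun x _ => sq_nonneg _)
      have hbound : ∀ ε > 0, (∫ t in t₀..t₁, ((t - t₀) * (t₁ - t) * E α t)^2)
          ≤ M * ε * (t₁ - t₀) := by
        intro ε hεpos
        obtain ⟨p, hp⟩ := exists_polynomial_near_of_continuousOn t₀ t₁ _ hcon ε hεpos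
        have hsplit : (∫ t in t₀..t₁, ((t - t₀) * (t₁ - t) * E α t)^2)
            = (∫ t in t₀..t₁, ((t - t₀) * (t₁ - t) * E α t)
                * (((t - t₀) * (t₁ - t) * E α t) - Polynomial.eval t p))
              + ∫ t in t₀..t₁, ((t - t₀) * (t₁ - t) * E α t) * Polynomial.eval t p := by
          rw [← intervalIntegral.integral_add]
          · exact intervalIntegral.integral_congr fun t _ => by ring
          · apply ContinuousOn.intervalIntegrable
            rw [Set.uIcc_of_le ht.le]
            exact hcon.mul (hcon.sub (hpoly p).continuous.continuousOn)
          · apply ContinuousOn.intervalIntegrable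
            rw [Set.uIcc_of_le ht.le]
            exact hcon.mul (hpoly p).continuous.continuousOn
        rw [hsplit, hmom p, add_zero]
        have hub : ∀ x ∈ Set.uIoc t₀ t₁,
            ‖((x - t₀) * (t₁ - x) * E α x)
              * (((x - t₀) * (t₁ - x) * E α x) - Polynomial.eval x p)‖ ≤ M * ε := by
          intro x hx
          rw [Set.uIoc_of_le ht.le] at hx
          have hxI : x ∈ Set.Icc t₀ t₁ := ⟨le_of_lt hx.1, hx.2⟩
          rw [Real.norm_eq_abs, abs_mul]
          have h1 := hM x hxI
          rw [Real.norm_eq_abs] at h1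
          have h2 : |((x - t₀) * (t₁ - x) * E α x) - Polynomial.eval x p| ≤ ε := by
            rw [abs_sub_comm]
            exact le_of_lt (hp x hxI)
          exact mul_le_mul h1 h2 (abs_nonneg _) hM0
        have := intervalIntegral.norm_integral_le_of_norm_le_const hub
        rw [Real.norm_eq_abs, abs_of_pos (by linarith : (0:ℝ) < t₁ - t₀)] at this
        calc (∫ t in t₀..t₁, ((t - t₀) * (t₁ - t) * E α t)
                * (((t - t₀) * (t₁ - t) * E α t) - Polynomial.eval t p))
            ≤ |∫ t in t₀..t₁, ((t - t₀) * (t₁ - t) * E α t)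
                * (((t - t₀) * (t₁ - t) * E α t) - Polynomial.eval t p)| := le_abs_self _
          _ ≤ M * ε * (t₁ - t₀) := this
      by_contra hne0
      have hIpos : 0 < ∫ t in t₀..t₁, ((t - t₀) * (t₁ - t) * E α t)^2 :=
        lt_of_le_of_ne hnonneg (Ne.symm hne0)
      set I := ∫ t in t₀..t₁, ((t - t₀) * (t₁ - t) * E α t)^2 with hIdef
      have hK : 0 ≤ M * (t₁ - t₀) := mul_nonneg hM0 (by linarith)
      have hεp : 0 < I / (2 * (M * (t₁ - t₀) + 1)) := by positivity
      have := hbound _ hεp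
      rw [show M * (I / (2 * (M * (t₁ - t₀) + 1))) * (t₁ - t₀)
          = (M * (t₁ - t₀)) * I / (2 * (M * (t₁ - t₀) + 1)) from by ring] at this
      have hlt : (M * (t₁ - t₀)) * I / (2 * (M * (t₁ - t₀) + 1)) < I := by
        rw [div_lt_iff₀ (by positivity)]
        nlinarith
      linarith
    -- local positivity around `t'` gives a contradiction
    have hWopen : IsOpen (V ∩ (E α) ⁻¹' {(0:ℝ)}ᶜ) :=
      (cont_E α).isOpen_inter_preimage hVopen isOpen_compl_singleton
    have ht'W : t' ∈ V ∩ (E α) ⁻¹' {(0:ℝ)}ᶜ := ⟨ht'V, hEne⟩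
    obtain ⟨ε, hε, hball⟩ := Metric.isOpen_iff.mp hWopen t' ht'W
    set a' : ℝ := max t₀ (t' - ε/2) with ha'def
    set b' : ℝ := min t₁ (t' + ε/2) with hb'def
    have ha'b' : a' < b' := by
      rw [ha'def, hb'def]
      simp only [max_lt_iff, lt_min_iff]
      refine ⟨⟨ht, by linarith⟩, by linarith, by linarith⟩
    have ht₀a' : t₀ ≤ a' := le_max_left _ _
    have hb't₁ : b' ≤ t₁ := min_le_left _ _
    have hsubball : Set.Icc a' b' ⊆ Metric.ball t' ε := by
      intro s hs
      have h1 : t' - ε/2 ≤ s := le_trans (le_max_right _ _) hs.1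
      have h2 : s ≤ t' + ε/2 := le_trans hs.2 (min_le_right _ _)
      rw [Metric.mem_ball, Real.dist_eq, abs_sub_lt_iff]
      constructor <;> linarith
    have hW' : Set.Icc a' b' ⊆ V ∩ (E α) ⁻¹' {(0:ℝ)}ᶜ :=
      fun s hs => hball (hsubball hs)
    have hint2 : IntervalIntegrable (fun t => ((t - t₀) * (t₁ - t) * E α t)^2)
        MeasureTheory.volume a' b' := by
      apply ContinuousOn.intervalIntegrable
      rw [Set.uIcc_of_le ha'b'.le]
      exact (hcon.mono (Set.Icc_subset_Icc ht₀a' hb't₁)).pow 2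
    have hpos : 0 < ∫ t in a'..b', ((t - t₀) * (t₁ - t) * E α t)^2 := by
      refine intervalIntegral.intervalIntegral_pos_of_pos_on hint2 (fun x hx => ?_) ha'b'
      have hx0 : t₀ < x := lt_of_le_of_lt ht₀a' hx.1
      have hx1 : x < t₁ := lt_of_lt_of_le hx.2 hb't₁
      have hEx : E α x ≠ 0 := (hW' (Set.Ioo_subset_Icc_self hx)).2
      have hprod : (x - t₀) * (t₁ - x) * E α x ≠ 0 :=
        mul_ne_zero (mul_ne_zero (by linarith) (by linarith)) hEx
      exact pow_pos (abs_pos.mpr hprod) 2 |>.trans_le (by rw [sq_abs])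
    have hle : (∫ t in a'..b', ((t - t₀) * (t₁ - t) * E α t)^2)
        ≤ ∫ t in t₀..t₁, ((t - t₀) * (t₁ - t) * E α t)^2 :=
      intervalIntegral.integral_mono_interval ht₀a' ha'b'.le hb't₁
        (MeasureTheory.ae_of_all _ fun x => sq_nonneg _) hsqint
    linarith
  · -- EL → variation vanishes
    intro hEL u hu hu0 hu1
    rw [part1 u hu hu0 hu1]
    have hzero : ∀ t ∈ Set.uIcc t₀ t₁, (∑ α, E α t * u t α) = (fun _ : ℝ => (0:ℝ)) t := by
      intro t htI
      rw [Set.uIcc_of_le ht.le] at htI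
      refine Finset.sum_eq_zero fun α _ => ?_
      rw [hEdef]
      simp only
      rw [hEL t htI α]
      ring
    rw [intervalIntegral.integral_congr hzero]
    simp
end
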